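/- arXiv:math/0002090 — 5 statements merged into one kernel-verified Lean document; each statement's English description precedes it below -/
import Mathlib

section
/- Let Λ = ℤ^n, Σ^+ the positive roots of the root system of type C_n with simple roots a_i = ε_i − ε_{i+1} (1 ≤ i ≤ n−1), a_n = 2ε_n, and Q^{∨,+} the nonnegative integer span of the simple coroots. Define the partial order μ ⪯ λ on Λ by: λ^+ − μ^+ ∈ Q^{∨,+} with λ^+ ≠ μ^+, or λ^+ = μ^+ and λ − μ ∈ Q^{∨,+}, where λ^+ denotes the unique dominant weight in the Weyl group orbit Wλ. Then for μ ∈ Λ and α ∈ Σ^+ with ⟨μ, α⟩ ≥ 2, one has μ − rα^∨ ≺ μ for all r = 1, …, ⟨μ,α⟩ − 1. -/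
/-!
Write `ν = μ - r α^∨`. A vector lies in `Q^{∨,+}` iff all its partial sums `∑_{i<k} v_i` are
nonnegative, so `μ - ν = r α^∨ ∈ Q^{∨,+}` is immediate, and `ν⁺ ⪯ μ⁺` amounts to: for every `k`, the
sum of the `k` largest `|ν_t|` is at most the sum of the `k` largest `|μ_t|`. For `α = ε_i ± ε_j`,
passing from `μ` to `ν` moves `r` units between `a = μ_i` and `b = ±μ_j`, where `0 < r < a - b`;
the new values stay between `b` and `a`, so their absolute values are bounded by `max |a| |b|` and
their sum by `|a| + |b|`. Hence every `k`-subset sum of `|ν|` is bounded by some `k`-subset sum of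
`|μ|`. For `α = 2ε_i` even `|ν| ≤ |μ|` pointwise.
-/

noncomputable section

/-- Standard basis vector e_i of ℤ^n. -/
def ez {n : ℕ} (i : Fin n) : Fin n → ℤ := fun j => if j = i then 1 else 0

/-- Pairing ⟨μ, α⟩ on ℤ^n. -/
def ipz {n : ℕ} (f g : Fin n → ℤ) : ℤ := ∑ i, f i * g i

/-- The positive roots Σ^+ of type C_n: ε_i − ε_j, ε_i + ε_j (i < j), 2ε_i. -/
def SigmaPlus (n : ℕ) : Set (Fin n → ℤ) :=
  {α | (∃ i j : Fin n, i < j ∧ (α = ez i - ez j ∨ α = ez i + ez j)) ∨ (∃ i, α = (2 : ℤ) • ez i)}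

/-- The coroot α^∨ = 2α/⟨α,α⟩ (for α a root of type C_n the formula below gives
exactly the coroot, using integer division). -/
def coroot {n : ℕ} (α : Fin n → ℤ) : Fin n → ℤ := fun i => (2 * α i) / (∑ j, α j * α j)

/-- The k-th simple coroot of type C_n: e_k − e_{k+1} for k < n−1, and e_{n−1} for k = n−1. -/
def scoroot {n : ℕ} (k : Fin n) : Fin n → ℤ :=
  fun j => (if j = k then 1 else 0) -
    (if ((j : ℕ) = (k : ℕ) + 1 ∧ (k : ℕ) + 1 < n) then 1 else 0)

/-- Membership in Q^{∨,+}, the nonnegative integer span of the simple coroots. -/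
def Qpos {n : ℕ} (v : Fin n → ℤ) : Prop :=
  ∃ c : Fin n → ℕ, v = ∑ k, (c k : ℤ) • scoroot k

/-- λ ≤ μ iff μ − λ ∈ Q^{∨,+}. -/
def wle {n : ℕ} (ν μ : Fin n → ℤ) : Prop := Qpos (μ - ν)

/-- μ is in the orbit of lam under W = S_n ⋉ (±1)^n. -/
def InOrbit {n : ℕ} (lam μ : Fin n → ℤ) : Prop :=
  ∃ (σ : Equiv.Perm (Fin n)) (s : Fin n → ℤ),
    (∀ i, s i = 1 ∨ s i = -1) ∧ ∀ i, μ i = s i * lam (σ i)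

/-- Dominant: weakly decreasing with nonnegative entries. -/
def Dominant {n : ℕ} (μ : Fin n → ℤ) : Prop :=
  (∀ i j : Fin n, i ≤ j → μ j ≤ μ i) ∧ ∀ i, 0 ≤ μ i

/-- μ⁺ : the dominant representative of the orbit W·lam. -/
def IsDomRep {n : ℕ} (lam mup : Fin n → ℤ) : Prop := Dominant mup ∧ InOrbit lam mup

open Finset

section PartialSum

variable {n : ℕ} {M : Type*}

def partialSum [AddCommMonoid M] (v : Fin n → M) (k : ℕ) : M := ∑ i with i.val < k, v i

section AddCommMonoid

variable [AddCommMonoid M]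

lemma partialSum_zero (v : Fin n → M) : partialSum v 0 = 0 := by
  simp [partialSum]

lemma partialSum_succ (v : Fin n → M) (j : Fin n) :
    partialSum v (j + 1) = partialSum v j + v j := by
  have hfilter : univ.filter (fun i : Fin n => (i : ℕ) < j + 1) =
      insert j (univ.filter fun i : Fin n => (i : ℕ) < j) := by
    ext i
    simp only [mem_filter, mem_univ, true_and, mem_insert, Fin.ext_iff]
    omega
  rw [partialSum, partialSum, hfilter, sum_insert (by simp), add_comm]

lemma partialSum_add (u v : Fin n → M) (k : ℕ) :
    partialSum (u + v) k = partialSum u k + partialSum v k := by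
  simp [partialSum, sum_add_distrib]

lemma partialSum_eq_sum_castLE (v : Fin n → M) {k : ℕ} (hk : k ≤ n) :
    partialSum v k = ∑ i : Fin k, v (Fin.castLE hk i) := by
  change _ = ∑ i, v (Fin.castLEEmb hk i)
  rw [partialSum, ← sum_map]
  congr 1
  ext i
  simp only [mem_filter, mem_univ, true_and, mem_map, Fin.castLEEmb_apply]
  exact ⟨fun h => ⟨⟨i, h⟩, rfl⟩, by rintro ⟨j, _, rfl⟩; simp⟩

variable [PartialOrder M] [IsOrderedAddMonoid M]

lemma partialSum_mono {v : Fin n → M} (hv : 0 ≤ v) : Monotone (partialSum v) := fun _ _ hkl =>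
  sum_le_sum_of_subset_of_nonneg (fun i => by simp only [mem_filter, mem_univ, true_and]; omega)
    fun i _ _ => hv i

-- The `i`-th smallest element of `U` has index at least `i`.
lemma sum_le_partialSum_card {d : Fin n → M} (hd : Antitone d) (U : Finset (Fin n)) :
    ∑ i ∈ U, d i ≤ partialSum d #U := by
  let e := U.orderEmbOfFin rfl
  have hle (i : Fin #U) : (i : ℕ) ≤ e i := by
    simpa using card_le_card_of_injOn e (s := Iio i) (t := Iio (e i))
      (fun a ha => by simpa using ha) e.injective.injOn
  calc ∑ i ∈ U, d i = ∑ i : Fin #U, d (e i) := by simpa [e] using sum_map univ e.toEmbedding d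
    _ ≤ ∑ i : Fin #U, d (Fin.castLE (card_le_univ U |>.trans_eq (Fintype.card_fin n)) i) :=
        sum_le_sum fun i _ => hd (hle i)
    _ = partialSum d #U := (partialSum_eq_sum_castLE _ _).symm

end AddCommMonoid

lemma partialSum_sub [AddCommGroup M] (u v : Fin n → M) (k : ℕ) :
    partialSum (u - v) k = partialSum u k - partialSum v k := by
  simp [partialSum, sum_sub_distrib]

lemma partialSum_smul (r : ℤ) (v : Fin n → ℤ) (k : ℕ) :
    partialSum (r • v) k = r * partialSum v k := by
  simp [partialSum, mul_sum]

lemma partialSum_ez (i : Fin n) (k : ℕ) :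
    partialSum (ez i) k = if (i : ℕ) < k then 1 else 0 := by
  simp [partialSum, ez]

end PartialSum

section CorootCone

variable {n : ℕ}

lemma eq_sum_partialSum_smul_scoroot (v : Fin n → ℤ) :
    v = ∑ k : Fin n, partialSum v (k + 1) • scoroot k := by
  ext j
  have hprev : ∑ k : Fin n, (if (j : ℕ) = k + 1 ∧ (k : ℕ) + 1 < n then partialSum v (k + 1) else 0)
      = partialSum v j := by
    obtain ⟨_ | m, hj⟩ := j
    · simp [partialSum_zero]
    · rw [sum_eq_single ⟨m, by omega⟩]
      · simp [hj]
      · intro k _ hk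
        exact if_neg fun h => hk (Fin.ext (by simp only at h ⊢; omega))
      · simp
  simp only [Finset.sum_apply, Pi.smul_apply, scoroot, smul_eq_mul, mul_sub, sum_sub_distrib,
    mul_ite, mul_one, mul_zero, sum_ite_eq, mem_univ, if_true, hprev]
  rw [partialSum_succ]
  ring

lemma qpos_of_partialSum_nonneg {v : Fin n → ℤ} (h : ∀ k, 0 ≤ partialSum v k) : Qpos v := by
  have htoNat (k : ℕ) : ((partialSum v k).toNat : ℤ) = partialSum v k := Int.toNat_of_nonneg (h k)
  exact ⟨fun k => (partialSum v (k + 1)).toNat,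
    by simpa [htoNat] using eq_sum_partialSum_smul_scoroot v⟩

end CorootCone

section Majorization

variable {ι M : Type*} [AddCommMonoid M]

-- For nonnegative `f` and `g` this is weak submajorization: for every `k`, the sum of the `k`
-- largest values of `f` is at most the sum of the `k` largest values of `g`.
def WeaklySubmajorizedBy [Preorder M] (f g : ι → M) : Prop :=
  ∀ T : Finset ι, ∃ T' : Finset ι, #T' = #T ∧ ∑ t ∈ T, f t ≤ ∑ t ∈ T', g t

variable [LinearOrder M] [IsOrderedAddMonoid M] {f g : ι → M}

lemma weaklySubmajorizedBy_of_le (h : f ≤ g) : WeaklySubmajorizedBy f g :=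
  fun T => ⟨T, rfl, sum_le_sum fun t _ => h t⟩

variable [DecidableEq ι] {i j : ι}

-- If `f i ≤ g i` keep `T`; otherwise `f i ≤ g j`, and `j` takes the place of `i`.
lemma exists_card_eq_sum_le_of_agree_off_pair (hfg : ∀ t, t ≠ i → t ≠ j → f t = g t)
    (hi : f i ≤ max (g i) (g j)) {T : Finset ι} (hiT : i ∈ T) (hjT : j ∉ T) :
    ∃ T' : Finset ι, #T' = #T ∧ ∑ t ∈ T, f t ≤ ∑ t ∈ T', g t := by
  have hrest : ∑ t ∈ T.erase i, f t = ∑ t ∈ T.erase i, g t :=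
    sum_congr rfl fun t ht => hfg t (ne_of_mem_erase ht) fun h => hjT (h ▸ mem_of_mem_erase ht)
  rcases max_choice (g i) (g j) with hmax | hmax <;> rw [hmax] at hi
  · refine ⟨T, rfl, ?_⟩
    rw [← add_sum_erase T f hiT, ← add_sum_erase T g hiT, hrest]
    gcongr
  · have hjT' : j ∉ T.erase i := fun h => hjT (mem_of_mem_erase h)
    refine ⟨insert j (T.erase i), by rw [card_insert_of_notMem hjT', card_erase_add_one hiT], ?_⟩
    rw [sum_insert hjT', ← add_sum_erase T f hiT, hrest]
    gcongr

lemma weaklySubmajorizedBy_of_agree_off_pair (hij : i ≠ j)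
    (hfg : ∀ t, t ≠ i → t ≠ j → f t = g t) (hsum : f i + f j ≤ g i + g j)
    (hi : f i ≤ max (g i) (g j)) (hj : f j ≤ max (g i) (g j)) : WeaklySubmajorizedBy f g := by
  intro T
  by_cases hiT : i ∈ T <;> by_cases hjT : j ∈ T
  · have hjT' : j ∈ T.erase i := mem_erase.mpr ⟨hij.symm, hjT⟩
    have hrest : ∑ t ∈ (T.erase i).erase j, f t = ∑ t ∈ (T.erase i).erase j, g t :=
      sum_congr rfl fun t ht =>
        hfg t (ne_of_mem_erase (mem_of_mem_erase ht)) (ne_of_mem_erase ht)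
    refine ⟨T, rfl, ?_⟩
    rw [← add_sum_erase T f hiT, ← add_sum_erase _ f hjT', ← add_sum_erase T g hiT,
      ← add_sum_erase _ g hjT', hrest, ← add_assoc, ← add_assoc]
    gcongr
  · exact exists_card_eq_sum_le_of_agree_off_pair hfg hi hiT hjT
  · exact exists_card_eq_sum_le_of_agree_off_pair (fun t htj hti => hfg t hti htj)
      (max_comm (g i) (g j) ▸ hj) hjT hiT
  · exact ⟨T, rfl, le_of_eq <| sum_congr rfl fun t ht =>
      hfg t (fun h => hiT (h ▸ ht)) fun h => hjT (h ▸ ht)⟩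

end Majorization

lemma abs_sub_add_abs_add_le {a b r : ℤ} (h0 : 0 ≤ r) (hr : r ≤ a - b) :
    |a - r| + |b + r| ≤ |a| + |b| := by
  rcases abs_cases a with ⟨ha, _⟩ | ⟨ha, _⟩ <;> rcases abs_cases b with ⟨hb, _⟩ | ⟨hb, _⟩ <;>
    rcases abs_cases (a - r) with ⟨har, _⟩ | ⟨har, _⟩ <;>
    rcases abs_cases (b + r) with ⟨hbr, _⟩ | ⟨hbr, _⟩ <;> omega

lemma weaklySubmajorizedBy_abs_of_transfer {ι : Type*} [DecidableEq ι] {ν μ : ι → ℤ} {i j : ι}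
    (hij : i ≠ j) (hoff : ∀ t, t ≠ i → t ≠ j → |ν t| = |μ t|) {a b r : ℤ} (h0 : 0 ≤ r)
    (hr : r ≤ a - b) (hνi : |ν i| = |a - r|) (hνj : |ν j| = |b + r|) (hμi : |μ i| = |a|)
    (hμj : |μ j| = |b|) : WeaklySubmajorizedBy (fun t => |ν t|) (fun t => |μ t|) := by
  have hmax (x : ℤ) (hbx : b ≤ x) (hxa : x ≤ a) : |x| ≤ max |μ i| |μ j| := by
    rw [hμi, hμj, max_comm]
    exact abs_le_max_abs_abs hbx hxa
  refine weaklySubmajorizedBy_of_agree_off_pair hij hoff ?_ ?_ ?_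
  · rw [hνi, hνj, hμi, hμj]
    exact abs_sub_add_abs_add_le h0 hr
  · rw [hνi]
    exact hmax _ (by omega) (by omega)
  · rw [hνj]
    exact hmax _ (by omega) (by omega)

section DominantRep

variable {n : ℕ}

lemma IsDomRep.exists_perm_abs {lam mup : Fin n → ℤ} (h : IsDomRep lam mup) :
    ∃ σ : Equiv.Perm (Fin n), ∀ i, mup i = |lam (σ i)| := by
  obtain ⟨⟨_, hnonneg⟩, σ, s, hs, hmup⟩ := h
  refine ⟨σ, fun i => ?_⟩
  rw [← abs_of_nonneg (hnonneg i), hmup, abs_mul]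
  rcases hs i with h | h <;> simp [h]

lemma IsDomRep.sum_abs_le_partialSum {lam mup : Fin n → ℤ} (h : IsDomRep lam mup)
    (U : Finset (Fin n)) : ∑ t ∈ U, |lam t| ≤ partialSum mup #U := by
  obtain ⟨σ, hσ⟩ := h.exists_perm_abs
  calc ∑ t ∈ U, |lam t| = ∑ i ∈ U.map σ.symm.toEmbedding, mup i := by simp [hσ]
    _ ≤ partialSum mup #(U.map σ.symm.toEmbedding) :=
        sum_le_partialSum_card (fun i j => h.1.1 i j) _
    _ = partialSum mup #U := by rw [card_map]

lemma IsDomRep.partialSum_le {μ ν mup nup : Fin n → ℤ} (hmu : IsDomRep μ mup)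
    (hnu : IsDomRep ν nup) (h : WeaklySubmajorizedBy (fun t => |ν t|) (fun t => |μ t|))
    (k : ℕ) : partialSum nup k ≤ partialSum mup k := by
  obtain ⟨σ, hσ⟩ := hnu.exists_perm_abs
  let S : Finset (Fin n) := {i | i.val < k}
  obtain ⟨T, hT, hle⟩ := h (S.map σ.toEmbedding)
  calc partialSum nup k = ∑ t ∈ S.map σ.toEmbedding, |ν t| := by simp [partialSum, S, hσ]
    _ ≤ ∑ t ∈ T, |μ t| := hle
    _ ≤ partialSum mup #T := hmu.sum_abs_le_partialSum T
    _ ≤ partialSum mup k :=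
        partialSum_mono (fun i => hmu.1.2 i) (by simp [hT, S, Fin.card_filter_val_lt])

end DominantRep

section PositiveRoots

variable {n : ℕ}

lemma ipz_ez_sub (f : Fin n → ℤ) (i j : Fin n) : ipz f (ez i - ez j) = f i - f j := by
  simp [ipz, ez, mul_sub, sum_sub_distrib]

lemma ipz_ez_add (f : Fin n → ℤ) (i j : Fin n) : ipz f (ez i + ez j) = f i + f j := by
  simp [ipz, ez, mul_add, sum_add_distrib]

lemma ipz_two_smul_ez (f : Fin n → ℤ) (i : Fin n) : ipz f ((2 : ℤ) • ez i) = 2 * f i := by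
  simp [ipz, ez, mul_comm]

lemma coroot_eq_self_of_ipz_self_eq_two {α : Fin n → ℤ} (h : ipz α α = 2) : coroot α = α := by
  ext i
  change 2 * α i / ipz α α = α i
  rw [h, Int.mul_ediv_cancel_left _ two_ne_zero]

lemma coroot_ez_sub {i j : Fin n} (hij : i ≠ j) : coroot (ez i - ez j) = ez i - ez j :=
  coroot_eq_self_of_ipz_self_eq_two (by simp [ipz_ez_sub, ez, hij, hij.symm])

lemma coroot_ez_add {i j : Fin n} (hij : i ≠ j) : coroot (ez i + ez j) = ez i + ez j :=
  coroot_eq_self_of_ipz_self_eq_two (by simp [ipz_ez_add, ez, hij, hij.symm])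

lemma coroot_two_smul_ez (i : Fin n) : coroot ((2 : ℤ) • ez i) = ez i := by
  ext t
  by_cases ht : t = i <;> simp [coroot, ez, ht]

lemma coroot_ne_zero {α : Fin n → ℤ} (hα : α ∈ SigmaPlus n) : coroot α ≠ 0 := by
  rcases hα with ⟨i, j, hij, rfl | rfl⟩ | ⟨i, rfl⟩
  · rw [coroot_ez_sub hij.ne]
    exact fun h => by simpa [ez, hij.ne] using congrFun h i
  · rw [coroot_ez_add hij.ne]
    exact fun h => by simpa [ez, hij.ne] using congrFun h i
  · rw [coroot_two_smul_ez]
    exact fun h => by simpa [ez] using congrFun h i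

lemma partialSum_coroot_nonneg {α : Fin n → ℤ} (hα : α ∈ SigmaPlus n) (k : ℕ) :
    0 ≤ partialSum (coroot α) k := by
  rcases hα with ⟨i, j, hij, rfl | rfl⟩ | ⟨i, rfl⟩
  · rw [coroot_ez_sub hij.ne, partialSum_sub, partialSum_ez, partialSum_ez]
    have : (i : ℕ) < j := hij
    split_ifs <;> omega
  · rw [coroot_ez_add hij.ne, partialSum_add, partialSum_ez, partialSum_ez]
    split_ifs <;> omega
  · rw [coroot_two_smul_ez, partialSum_ez]
    split_ifs <;> omega

lemma weaklySubmajorizedBy_abs_sub_smul_coroot {μ α : Fin n → ℤ} (hα : α ∈ SigmaPlus n) {r : ℤ}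
    (hr1 : 1 ≤ r) (hr2 : r ≤ ipz μ α - 1) :
    WeaklySubmajorizedBy (fun t => |(μ - r • coroot α) t|) (fun t => |μ t|) := by
  rcases hα with ⟨i, j, hij, rfl | rfl⟩ | ⟨i, rfl⟩
  · rw [ipz_ez_sub] at hr2
    rw [coroot_ez_sub hij.ne]
    refine weaklySubmajorizedBy_abs_of_transfer hij.ne (fun t hti htj => by simp [ez, hti, htj])
      (a := μ i) (b := μ j) (r := r) (by omega) (by omega) ?_ ?_ rfl rfl
    · simp [ez, hij.ne]
    · simp [ez, hij.ne']
  · rw [ipz_ez_add] at hr2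
    rw [coroot_ez_add hij.ne]
    refine weaklySubmajorizedBy_abs_of_transfer hij.ne (fun t hti htj => by simp [ez, hti, htj])
      (a := μ i) (b := -μ j) (r := r) (by omega) (by omega) ?_ ?_ rfl (abs_neg _).symm
    · simp [ez, hij.ne]
    · simp [ez, hij.ne', neg_add_eq_sub, abs_sub_comm]
  · rw [ipz_two_smul_ez] at hr2
    rw [coroot_two_smul_ez]
    refine weaklySubmajorizedBy_of_le fun t => ?_
    by_cases hti : t = i
    · subst hti
      simpa [ez] using
        abs_le_max_abs_abs (a := -μ t) (b := μ t - r) (c := μ t) (by omega) (by omega)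
    · simp [ez, hti]

end PositiveRoots

theorem stmt2_general (n : ℕ) (μ : Fin n → ℤ) (α : Fin n → ℤ) (hα : α ∈ SigmaPlus n)
    (r : ℤ) (hr1 : 1 ≤ r) (hr2 : r ≤ ipz μ α - 1)
    (mup nup : Fin n → ℤ)
    (hmu : IsDomRep μ mup) (hnu : IsDomRep (μ - r • coroot α) nup) :
    (wle nup mup ∧ nup ≠ mup) ∨
      (nup = mup ∧ wle (μ - r • coroot α) μ ∧ μ - r • coroot α ≠ μ) := by
  have hlt : wle (μ - r • coroot α) μ := qpos_of_partialSum_nonneg fun k => by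
    rw [sub_sub_cancel, partialSum_smul]
    exact mul_nonneg (by omega) (partialSum_coroot_nonneg hα k)
  have hne : μ - r • coroot α ≠ μ := by
    rw [Ne, sub_eq_self, smul_eq_zero, not_or]
    exact ⟨by omega, coroot_ne_zero hα⟩
  have hdom : wle nup mup := qpos_of_partialSum_nonneg fun k => by
    rw [partialSum_sub, sub_nonneg]
    exact hmu.partialSum_le hnu (weaklySubmajorizedBy_abs_sub_smul_coroot hα hr1 hr2) k
  by_cases heq : nup = mup
  · exact Or.inr ⟨heq, hlt, hne⟩
  · exact Or.inl ⟨hdom, heq⟩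

/-- if ⟨μ, α⟩ ≥ 2 then μ − rα^∨ ≺ μ for r = 1, …, ⟨μ,α⟩ − 1, where
ν ≺ μ means ν⁺ < μ⁺, or ν⁺ = μ⁺ and ν < μ (with < induced by Q^{∨,+}). -/
theorem stmt2 (n : ℕ) (μ : Fin n → ℤ) (α : Fin n → ℤ) (hα : α ∈ SigmaPlus n)
    (h2 : 2 ≤ ipz μ α) (r : ℤ) (hr1 : 1 ≤ r) (hr2 : r ≤ ipz μ α - 1)
    (mup nup : Fin n → ℤ)
    (hmu : IsDomRep μ mup) (hnu : IsDomRep (μ - r • coroot α) nup) :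
    (wle nup mup ∧ nup ≠ mup) ∨
      (nup = mup ∧ wle (μ - r • coroot α) μ ∧ μ - r • coroot α ≠ μ) :=
  stmt2_general n μ α hα r hr1 hr2 mup nup hmu hnu

end
end

section
/- Let μ ∈ ℤ^n and α a positive root of type C_n with ⟨μ, α⟩ ≤ −2. Then μ + rα^∨ ≺ μ for r = 1, …, −⟨μ,α⟩ − 1, where ≺ is the order in which ν ≺ μ iff ν^+ < μ^+, or ν^+ = μ^+ and ν < μ (with < meaning the difference lies in the positive coroot cone and is nonzero). -/
noncomputable section

/-!
Put `m = -⟨μ, α⟩` and let `s_α μ = μ + m α^∨` be the reflection of `μ`. Then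
`m (μ + r α^∨) = (m - r) μ + r s_α μ` is a proper convex combination of two points of `W μ`.
For the simple coroots of type `C_n` the prefix sums of `ν` are its coordinates in the basis of
simple coroots, and the `k`-th prefix sum of `ν⁺` is the largest sum of `k + 1` of the `|ν_l|`,
a convex function of `ν` that is constant on `W`-orbits; so `ν⁺ ≤ μ⁺`. Equality is excluded by
the `W`-invariant norm, which is strictly convex and takes the same value at `μ` and `s_α μ ≠ μ`.
-/

open Finset

theorem Antitone.sum_le_sum_Iic {ι M : Type*} [LinearOrder ι] [LocallyFiniteOrderBot ι]
    [AddCommMonoid M] [LinearOrder M] [IsOrderedAddMonoid M] {d : ι → M} (hd : Antitone d)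
    {S : Finset ι} {k : ι} (hS : #S = #(Iic k)) : ∑ l ∈ S, d l ≤ ∑ l ∈ Iic k, d l :=
  calc ∑ l ∈ S, d l
      ≤ ∑ l ∈ S ∩ Iic k, d l + #(S \ Iic k) • d k := by
        rw [← sum_inter_add_sum_sdiff S (Iic k)]
        gcongr
        refine sum_le_card_nsmul _ _ _ fun l hl => hd ?_
        simp only [mem_sdiff, mem_Iic, not_le] at hl
        exact hl.2.le
    _ = ∑ l ∈ Iic k ∩ S, d l + #(Iic k \ S) • d k := by
        rw [inter_comm, card_sdiff_comm hS]
    _ ≤ ∑ l ∈ Iic k, d l := by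
        rw [← sum_inter_add_sum_sdiff (Iic k) S]
        gcongr
        refine card_nsmul_le_sum _ _ _ fun l hl => hd ?_
        exact mem_Iic.mp (mem_sdiff.mp hl).1

variable {n : ℕ}

def prefixSum (v : Fin n → ℤ) (k : Fin n) : ℤ := ∑ i ∈ Iic k, v i

theorem prefixSum_succ (v : Fin n → ℤ) {k l : Fin n} (h : (l : ℕ) = k + 1) :
    prefixSum v l = prefixSum v k + v l := by
  have : Iic l = insert l (Iic k) := by
    ext i
    simp only [mem_insert, mem_Iic, Fin.le_def, Fin.ext_iff]
    omega
  rw [prefixSum, prefixSum, this, sum_insert (by rw [mem_Iic, Fin.le_def]; omega), add_comm]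

-- The prefix sums of `scoroot k` are the indicator of `k`, so the prefix sums of `v` are its
-- coefficients in the simple coroots.
theorem qpos_of_prefixSum_nonneg {v : Fin n → ℤ} (h : ∀ k, 0 ≤ prefixSum v k) : Qpos v := by
  refine ⟨fun k => (prefixSum v k).toNat, funext fun l => ?_⟩
  simp only [Int.toNat_of_nonneg (h _), Finset.sum_apply, Pi.smul_apply, smul_eq_mul, scoroot,
    mul_sub, mul_ite, mul_one, mul_zero, sum_sub_distrib, sum_ite_eq, mem_univ, if_true]
  rcases Nat.eq_zero_or_pos l with hl | hl
  · rw [sum_eq_zero fun k _ => if_neg (by omega), prefixSum]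
    have : Iic l = {l} := by
      ext i
      simp only [mem_Iic, mem_singleton, Fin.le_def, Fin.ext_iff]
      omega
    simp [this]
  · have hk : (l : ℕ) - 1 < n := by omega
    rw [sum_eq_single ⟨l - 1, hk⟩ (fun k _ hk' => if_neg fun h => hk' (Fin.ext (by simp; omega)))
      (by simp), if_pos (by simp; omega), prefixSum_succ v (k := ⟨l - 1, hk⟩) (by simp; omega)]
    ring

def AbsPerm (x y : Fin n → ℤ) : Prop :=
  ∃ σ : Equiv.Perm (Fin n), ∀ l, |y l| = |x (σ l)|

theorem AbsPerm.symm {x y : Fin n → ℤ} (h : AbsPerm x y) : AbsPerm y x := by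
  obtain ⟨σ, hσ⟩ := h
  exact ⟨σ.symm, fun l => by rw [hσ, Equiv.apply_symm_apply]⟩

theorem AbsPerm.trans {x y z : Fin n → ℤ} (hxy : AbsPerm x y) (hyz : AbsPerm y z) :
    AbsPerm x z := by
  obtain ⟨σ, hσ⟩ := hxy
  obtain ⟨τ, hτ⟩ := hyz
  exact ⟨τ.trans σ, fun l => by rw [hτ, hσ, Equiv.trans_apply]⟩

theorem InOrbit.absPerm {x y : Fin n → ℤ} (h : InOrbit x y) : AbsPerm x y := by
  obtain ⟨σ, s, hs, hy⟩ := h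
  refine ⟨σ, fun l => ?_⟩
  rcases hs l with h | h <;> simp [hy, h]

theorem AbsPerm.sum_sq_eq {x y : Fin n → ℤ} (h : AbsPerm x y) :
    ∑ l, y l ^ 2 = ∑ l, x l ^ 2 := by
  obtain ⟨σ, hσ⟩ := h
  simp_rw [← sq_abs (y _), hσ, sq_abs]
  exact Equiv.sum_comp σ (fun l => x l ^ 2)

theorem AbsPerm.sum_abs_le_prefixSum {x d : Fin n → ℤ} (hd : Dominant d) (h : AbsPerm x d)
    {S : Finset (Fin n)} {k : Fin n} (hS : #S = #(Iic k)) :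
    ∑ l ∈ S, |x l| ≤ prefixSum d k := by
  obtain ⟨σ, hσ⟩ := h
  calc ∑ l ∈ S, |x l| = ∑ l ∈ S.map σ.symm.toEmbedding, d l := by
        rw [sum_map]
        refine sum_congr rfl fun l _ => ?_
        rw [← abs_of_nonneg (hd.2 _), hσ, Equiv.coe_toEmbedding, Equiv.apply_symm_apply]
    _ ≤ prefixSum d k := Antitone.sum_le_sum_Iic hd.1 (by rwa [card_map])

theorem AbsPerm.exists_sum_abs_eq_prefixSum {x d : Fin n → ℤ} (hd : ∀ l, 0 ≤ d l)
    (h : AbsPerm x d) (k : Fin n) :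
    ∃ S : Finset (Fin n), #S = #(Iic k) ∧ ∑ l ∈ S, |x l| = prefixSum d k := by
  obtain ⟨σ, hσ⟩ := h
  refine ⟨(Iic k).map σ.toEmbedding, card_map _, ?_⟩
  rw [sum_map, prefixSum]
  exact sum_congr rfl fun l _ => by rw [Equiv.coe_toEmbedding, ← hσ, abs_of_nonneg (hd l)]

theorem wle_of_smul_eq_add {x y z d e : Fin n → ℤ} {a b : ℤ} (ha : 0 ≤ a) (hb : 0 ≤ b)
    (hab : 0 < a + b) (h : (a + b) • z = a • x + b • y) (hd : Dominant d) (he : Dominant e)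
    (hx : AbsPerm x d) (hy : AbsPerm y d) (hz : AbsPerm z e) : wle e d := by
  refine qpos_of_prefixSum_nonneg fun k => ?_
  obtain ⟨S, hS, hzS⟩ := hz.exists_sum_abs_eq_prefixSum he.2 k
  have key : (a + b) * prefixSum e k ≤ (a + b) * prefixSum d k :=
    calc (a + b) * prefixSum e k = ∑ l ∈ S, |a * x l + b * y l| := by
          rw [← hzS, mul_sum]
          refine sum_congr rfl fun l _ => ?_
          have hl := congrFun h l
          simp only [Pi.smul_apply, Pi.add_apply, smul_eq_mul] at hl
          rw [← hl, abs_mul, abs_of_pos hab]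
      _ ≤ ∑ l ∈ S, (a * |x l| + b * |y l|) := by
          gcongr with l
          refine (abs_add_le _ _).trans_eq ?_
          rw [abs_mul, abs_mul, abs_of_nonneg ha, abs_of_nonneg hb]
      _ = a * ∑ l ∈ S, |x l| + b * ∑ l ∈ S, |y l| := by rw [sum_add_distrib, mul_sum, mul_sum]
      _ ≤ a * prefixSum d k + b * prefixSum d k := by
          gcongr
          exacts [hx.sum_abs_le_prefixSum hd hS, hy.sum_abs_le_prefixSum hd hS]
      _ = (a + b) * prefixSum d k := by ring
  have hsub : prefixSum (d - e) k = prefixSum d k - prefixSum e k := sum_sub_distrib ..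
  rw [hsub, sub_nonneg]
  exact le_of_mul_le_mul_left key hab

theorem sum_sq_lt_of_smul_eq_add {x y z : Fin n → ℤ} {a b : ℤ} (ha : 0 < a) (hb : 0 < b)
    (h : (a + b) • z = a • x + b • y) (hxy : x ≠ y) (hsq : ∑ l, y l ^ 2 = ∑ l, x l ^ 2) :
    ∑ l, z l ^ 2 < ∑ l, x l ^ 2 := by
  have hpos : 0 < ∑ l, (x l - y l) ^ 2 := by
    obtain ⟨l, hl⟩ := Function.ne_iff.mp hxy
    exact sum_pos' (fun _ _ => sq_nonneg _) ⟨l, mem_univ _, by positivity [sub_ne_zero.mpr hl]⟩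
  have hexp : (a + b) ^ 2 * ∑ l, z l ^ 2
      = (a + b) * (a * ∑ l, x l ^ 2 + b * ∑ l, y l ^ 2) - a * b * ∑ l, (x l - y l) ^ 2 := by
    simp only [mul_sum, ← sum_add_distrib, ← sum_sub_distrib]
    refine sum_congr rfl fun l _ => ?_
    have hl := congrFun h l
    simp only [Pi.smul_apply, Pi.add_apply, smul_eq_mul] at hl
    linear_combination ((a + b) * z l + a * x l + b * y l) * hl
  rw [hsq] at hexp
  nlinarith [mul_pos ha hb, mul_pos (mul_pos ha hb) hpos]

theorem ez_eq_single (i : Fin n) : ez i = Pi.single i 1 := funext fun _ => (Pi.single_apply ..).symm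

theorem coroot_eq_self {α : Fin n → ℤ} (h : α ⬝ᵥ α = 2) : coroot α = α :=
  funext fun l => by
    change 2 * α l / (α ⬝ᵥ α) = α l
    rw [h, Int.mul_ediv_cancel_left _ two_ne_zero]

theorem coroot_two_smul {v : Fin n → ℤ} (h : v ⬝ᵥ v = 1) : coroot ((2 : ℤ) • v) = v :=
  funext fun l => by
    change 2 * ((2 : ℤ) • v) l / ((2 : ℤ) • v ⬝ᵥ (2 : ℤ) • v) = v l
    simp only [smul_dotProduct, dotProduct_smul, h, Pi.smul_apply, smul_eq_mul]
    omega

def reflect (α μ : Fin n → ℤ) : Fin n → ℤ := μ - ipz μ α • coroot α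

-- `reflect α` swaps the coordinates `i, j` of `α = ε_i ∓ ε_j` (negating them for `+`),
-- and negates the coordinate `i` of `α = 2 ε_i`.
theorem absPerm_reflect {α : Fin n → ℤ} (hα : α ∈ SigmaPlus n) (μ : Fin n → ℤ) :
    AbsPerm μ (reflect α μ) := by
  rcases hα with ⟨i, j, hij, rfl | rfl⟩ | ⟨i, rfl⟩
  · rw [reflect, coroot_eq_self (by simp [ez_eq_single, hij.ne])]
    refine ⟨Equiv.swap i j, fun l => ?_⟩
    change |μ l - μ ⬝ᵥ _ * _| = _
    simp only [ez_eq_single, dotProduct_sub, dotProduct_single, mul_one, Pi.sub_apply,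
      Pi.single_apply, Equiv.swap_apply_def]
    split_ifs <;> subst_vars <;> first | exact absurd hij (lt_irrefl _) | (congr 1; ring1)
  · rw [reflect, coroot_eq_self (by simp [ez_eq_single, hij.ne])]
    refine ⟨Equiv.swap i j, fun l => ?_⟩
    change |μ l - μ ⬝ᵥ _ * _| = _
    simp only [ez_eq_single, dotProduct_add, dotProduct_single, mul_one, Pi.add_apply,
      Pi.single_apply, Equiv.swap_apply_def]
    split_ifs <;> subst_vars <;>
      first | exact absurd hij (lt_irrefl _) | (congr 1; ring1) | (rw [← abs_neg]; congr 1; ring1)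
  · rw [reflect, coroot_two_smul (by simp [ez_eq_single])]
    refine ⟨1, fun l => ?_⟩
    change |μ l - μ ⬝ᵥ ((2 : ℤ) • ez i) * ez i l| = _
    simp only [dotProduct_smul, ez_eq_single, dotProduct_single, mul_one, smul_eq_mul,
      Pi.single_apply, mul_ite, mul_zero, Equiv.Perm.coe_one, id_eq]
    split_ifs with hl
    · rw [hl, ← abs_neg]
      congr 1
      ring
    · rw [sub_zero]

theorem coroot_dotProduct_self {α : Fin n → ℤ} (hα : α ∈ SigmaPlus n) : coroot α ⬝ᵥ α = 2 := by
  rcases hα with ⟨i, j, hij, rfl | rfl⟩ | ⟨i, rfl⟩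
  · rw [coroot_eq_self] <;> simp [ez_eq_single, hij.ne]
  · rw [coroot_eq_self] <;> simp [ez_eq_single, hij.ne]
  · rw [coroot_two_smul] <;> simp [ez_eq_single]

theorem reflect_ne_self {α μ : Fin n → ℤ} (hα : α ∈ SigmaPlus n) (h : ipz μ α ≠ 0) :
    reflect α μ ≠ μ := by
  intro heq
  have hneg : ipz (reflect α μ) α = -ipz μ α := by
    change (μ - ipz μ α • coroot α) ⬝ᵥ α = -ipz μ α
    rw [sub_dotProduct, smul_dotProduct, coroot_dotProduct_self hα, smul_eq_mul]
    change ipz μ α - _ = _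
    ring
  rw [heq] at hneg
  omega

theorem stmt3_general (n : ℕ) (μ : Fin n → ℤ) (α : Fin n → ℤ) (hα : α ∈ SigmaPlus n)
    (r : ℤ) (hr1 : 1 ≤ r) (hr2 : r ≤ -ipz μ α - 1)
    (mup nup : Fin n → ℤ)
    (hmu : IsDomRep μ mup) (hnu : IsDomRep (μ + r • coroot α) nup) :
    (wle nup mup ∧ nup ≠ mup) ∨
      (nup = mup ∧ wle (μ + r • coroot α) μ ∧ μ + r • coroot α ≠ μ) := by
  left
  set m := -ipz μ α with hm
  have hcomb : (m - r + r) • (μ + r • coroot α) = (m - r) • μ + r • reflect α μ := by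
    ext l
    simp only [reflect, hm, Pi.add_apply, Pi.sub_apply, Pi.smul_apply, smul_eq_mul]
    ring
  have hμ := hmu.2.absPerm
  have hν := hnu.2.absPerm
  have hrefl := absPerm_reflect hα μ
  refine ⟨wle_of_smul_eq_add (by omega) (by omega) (by omega) hcomb hmu.1 hnu.1 hμ
    (hrefl.symm.trans hμ) hν, fun heq => ?_⟩
  have hlt := sum_sq_lt_of_smul_eq_add (by omega) (by omega) hcomb
    (reflect_ne_self hα (by omega)).symm hrefl.sum_sq_eq
  rw [← hν.sum_sq_eq, ← hμ.sum_sq_eq, heq] at hlt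
  exact lt_irrefl _ hlt

/-- if ⟨μ, α⟩ ≤ −2 then μ + rα^∨ ≺ μ for r = 1, …, −⟨μ,α⟩ − 1, where
ν ≺ μ means ν⁺ < μ⁺, or ν⁺ = μ⁺ and ν < μ (with < induced by Q^{∨,+}). -/
theorem stmt3 (n : ℕ) (μ : Fin n → ℤ) (α : Fin n → ℤ) (hα : α ∈ SigmaPlus n)
    (h2 : ipz μ α ≤ -2) (r : ℤ) (hr1 : 1 ≤ r) (hr2 : r ≤ -ipz μ α - 1)
    (mup nup : Fin n → ℤ)
    (hmu : IsDomRep μ mup) (hnu : IsDomRep (μ + r • coroot α) nup) :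
    (wle nup mup ∧ nup ≠ mup) ∨
      (nup = mup ∧ wle (μ + r • coroot α) μ ∧ μ + r • coroot α ≠ μ) :=
  stmt3_general n μ α hα r hr1 hr2 mup nup hmu hnu

end
end

section
/- Let γ_λ ∈ (ℂ^×)^n be defined by γ_λ = t_0^{ρ_l(λ)} · t_n^{ρ_l(λ)} · t^{ρ_m(λ)} · q^λ (coordinatewise products), where ρ_m(λ) = ∑_{α∈Σ_m^+} ε(⟨λ,α⟩)α^∨ and ρ_l(λ) = ∑_{α∈Σ_l^+} ε(⟨λ,α⟩)α^∨ with ε(k) = 1 for k ≥ 0 and ε(k) = −1 for k < 0. Then ρ_m(λ) = w_λ ρ_m and ρ_l(λ) = w_λ ρ_l, where w_λ ∈ W is the unique minimal-length element with λ = w_λ λ^+, ρ_m = 2∑_{i=1}^n (n−i)ε_i, and ρ_l = ∑_{i=1}^n ε_i. -/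
noncomputable section

/-- The generators of W = S_n ⋉ (±1)^n acting on ℤ^n (0-based): for i < n−1 the
transposition of coordinates i, i+1; for i = n−1 the sign change of the last
coordinate. -/
def wg (n : ℕ) [NeZero n] (i : Fin n) (x : Fin n → ℤ) : Fin n → ℤ :=
  if (i : ℕ) = n - 1 then (fun j => if (j : ℕ) = n - 1 then -(x j) else x j)
  else fun j =>
    if (j : ℕ) = (i : ℕ) then x (Fin.ofNat n ((i : ℕ) + 1 : ℕ))
    else if (j : ℕ) = (i : ℕ) + 1 then x i
    else x j

/-- wwprod [i₁,…,i_r] = s_{i₁} ∘ ⋯ ∘ s_{i_r} ∈ W. -/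
def wwprod (n : ℕ) [NeZero n] (ω : List (Fin n)) : (Fin n → ℤ) → (Fin n → ℤ) :=
  ω.foldr (fun i f => wg n i ∘ f) id

/-- ε : ℤ → {±1}, with ε(k) = −1 for k < 0 and ε(k) = 1 otherwise. -/
def epsign (k : ℤ) : ℤ := if k < 0 then -1 else 1

/-- ρ_m = sum of the coroots of Σ_m^+ : ρ_m = 2∑ (n−i)ε_i, i.e. (ρ_m)_i = 2(n−1−i)
in 0-based coordinates. -/
def rhoM (n : ℕ) : Fin n → ℤ := fun i => 2 * ((n : ℤ) - 1 - (i : ℕ))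

/-- ρ_l = ∑ ε_i. -/
def rhoL (n : ℕ) : Fin n → ℤ := fun _ => 1

/-- ρ_m(λ) = ∑_{α ∈ Σ_m^+} ε(⟨λ,α⟩) α^∨, with Σ_m^+ = {ε_i ± ε_j : i < j} and α^∨ = α. -/
def rhoMlam {n : ℕ} (lam : Fin n → ℤ) : Fin n → ℤ :=
  ∑ i : Fin n, ∑ j : Fin n,
    if i < j then epsign (lam i - lam j) • (ez i - ez j) + epsign (lam i + lam j) • (ez i + ez j)
    else 0

/-- ρ_l(λ) = ∑_{α ∈ Σ_l^+} ε(⟨λ,α⟩) α^∨ = ∑_i ε(2λ_i) ε_i. -/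
def rhoLlam {n : ℕ} (lam : Fin n → ℤ) : Fin n → ℤ :=
  ∑ i : Fin n, epsign (2 * lam i) • ez i

-- auxiliary

lemma epsign_nonneg {k : ℤ} (h : 0 ≤ k) : epsign k = 1 := by
  simp [epsign, not_lt.2 h, Int.not_lt.2 h]

lemma epsign_neg {k : ℤ} (h : k ≠ 0) : epsign (-k) = -epsign k := by
  unfold epsign; rcases lt_trichotomy k 0 with h1 | h1 | h1 <;> simp_all <;> omega

def G {n : ℕ} (μ : Fin n → ℤ) (k j : Fin n) : ℤ :=
  if k < j then epsign (μ k - μ j) + epsign (μ k + μ j)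
  else if j < k then epsign (μ j + μ k) - epsign (μ j - μ k)
  else 0

lemma rhoMlam_apply {n : ℕ} (μ : Fin n → ℤ) (k : Fin n) :
    rhoMlam μ k = ∑ j : Fin n, G μ k j := by
  have hterm : ∀ i j : Fin n,
      (if i < j then epsign (μ i - μ j) • (ez i - ez j) + epsign (μ i + μ j) • (ez i + ez j)
        else (0 : Fin n → ℤ)) k
      = (if i < j then (if i = k then G μ k j else if j = k then G μ k i else 0) else 0) := by
    intro i j
    by_cases hij : i < j
    · simp only [hij, if_true, Pi.add_apply, Pi.smul_apply, Pi.sub_apply, smul_eq_mul, ez, G]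
      by_cases hik : i = k
      · subst hik
        have hjk : ¬ (j = i) := fun h => absurd h.symm (ne_of_lt hij)
        have hij' : ¬ (i = j) := ne_of_lt hij
        simp [hij, hjk, hij']
      · by_cases hjk : j = k
        · subst hjk
          have hji' : ¬ (j = i) := fun h => hik h.symm
          have hji : ¬ (j < i) := asymm hij
          have hij'' : ¬ (i = j) := fun h => hik h
          simp [hji', hij'', hij, hji]
          ring
        · have h1 : ¬ (k = i) := fun h => hik h.symm
          have h2 : ¬ (k = j) := fun h => hjk h.symm
          simp [h1, h2, hik, hjk]
    · simp [hij]
  rw [rhoMlam, Finset.sum_apply, ]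
  simp only [Finset.sum_apply, hterm]
  rw [← Finset.add_sum_erase (f := fun i => ∑ j : Fin n,
        (if i < j then (if i = k then G μ k j else if j = k then G μ k i else 0) else 0))
        Finset.univ (Finset.mem_univ k)]
  have h1 : ∑ j : Fin n, (if k < j then (if k = k then G μ k j else if j = k then G μ k k else 0) else 0)
      = ∑ j : Fin n, (if k < j then G μ k j else 0) := by
    apply Finset.sum_congr rfl; intro j _; simp
  have h2 : ∀ i ∈ Finset.univ.erase k, ∑ j : Fin n,
      (if i < j then (if i = k then G μ k j else if j = k then G μ k i else 0) else 0)
      = (if i < k then G μ k i else 0) := by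
    intro i hi
    have hik : i ≠ k := (Finset.mem_erase.1 hi).1
    rw [Finset.sum_eq_single k]
    · simp [hik]
    · intro j _ hjk
      by_cases hij : i < j <;> simp [hij, hik, hjk]
    · simp
  rw [h1, Finset.sum_congr rfl h2, Finset.sum_erase (f := fun i => if i < k then G μ k i else 0) _ (by simp)]
  rw [← Finset.sum_add_distrib]
  apply Finset.sum_congr rfl
  intro j _
  rcases lt_trichotomy k j with h | h | h
  · simp [G, h, asymm h]
  · simp [G, h]
  · simp [G, h, asymm h]

lemma rhoLlam_apply {n : ℕ} (μ : Fin n → ℤ) (k : Fin n) :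
    rhoLlam μ k = epsign (2 * μ k) := by
  rw [rhoLlam, Finset.sum_apply]
  rw [Finset.sum_eq_single k]
  · simp [ez]
  · intro j _ hjk; simp [ez, Ne.symm hjk]
  · simp

lemma swap_lt_iff {n : ℕ} (a b : Fin n) (hb : (b : ℕ) = (a : ℕ) + 1) (k j : Fin n)
    (h1 : ¬(k = a ∧ j = b)) (h2 : ¬(k = b ∧ j = a)) :
    (Equiv.swap a b k < Equiv.swap a b j) ↔ k < j := by
  have hab : a ≠ b := fun h => by rw [h] at hb; omega
  have hσ : ∀ x : Fin n, ((Equiv.swap a b x : Fin n) : ℕ)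
      = if x = a then (b : ℕ) else if x = b then (a : ℕ) else (x : ℕ) := by
    intro x
    by_cases h : x = a
    · simp [h, Equiv.swap_apply_left]
    · by_cases h' : x = b
      · simp [h', Equiv.swap_apply_right, Ne.symm hab]
      · simp [h, h', Equiv.swap_apply_of_ne_of_ne]
  rw [Fin.lt_def, Fin.lt_def, hσ k, hσ j]
  split_ifs <;> (simp only [Fin.ext_iff, not_and] at * <;> omega)

lemma G_swap {n : ℕ} (μ : Fin n → ℤ) (a b : Fin n) (hb : (b : ℕ) = (a : ℕ) + 1)
    (hne : μ a ≠ μ b) (k j : Fin n) :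
    G (μ ∘ (Equiv.swap a b)) k j = G μ (Equiv.swap a b k) (Equiv.swap a b j) := by
  have hab : a < b := by rw [Fin.lt_def]; omega
  have hsub : μ a - μ b ≠ 0 := sub_ne_zero.2 hne
  by_cases h1 : k = a ∧ j = b
  · obtain ⟨hk, hj⟩ := h1
    rw [hk, hj]
    rw [G, G, Equiv.swap_apply_left, Equiv.swap_apply_right, if_pos hab,
      if_neg (asymm hab), if_pos hab]
    simp only [Function.comp_apply, Equiv.swap_apply_left, Equiv.swap_apply_right]
    have : μ b - μ a = -(μ a - μ b) := by ring
    rw [this, epsign_neg hsub]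
    have : μ b + μ a = μ a + μ b := by ring
    rw [this]; ring
  · by_cases h2 : k = b ∧ j = a
    · obtain ⟨hk, hj⟩ := h2
      rw [hk, hj]
      rw [G, G, Equiv.swap_apply_left, Equiv.swap_apply_right, if_neg (asymm hab),
        if_pos hab, if_pos hab]
      simp only [Function.comp_apply, Equiv.swap_apply_left, Equiv.swap_apply_right]
      have e1 : μ b - μ a = -(μ a - μ b) := by ring
      have e2 : μ b + μ a = μ a + μ b := by ring
      rw [e1, e2, epsign_neg hsub]; ring
    · have e1 : (Equiv.swap a b k < Equiv.swap a b j) = (k < j) :=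
        propext (swap_lt_iff a b hb k j h1 h2)
      have e2 : (Equiv.swap a b j < Equiv.swap a b k) = (j < k) :=
        propext (swap_lt_iff a b hb j k (fun h => h2 ⟨h.2, h.1⟩) (fun h => h1 ⟨h.2, h.1⟩))
      simp only [G, Function.comp_apply, e1, e2]

lemma G_neg {n : ℕ} (μ : Fin n → ℤ) (c : Fin n) (hc : ∀ x : Fin n, x ≠ c → x < c) (k j : Fin n) :
    G (fun x => if x = c then -(μ x) else μ x) k j = (if k = c then -1 else 1) * G μ k j := by
  rcases eq_or_ne k c with rfl | hk
  · rcases eq_or_ne j k with rfl | hj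
    · simp [G]
    · have hjk : j < k := hc j hj
      rw [G, G, if_neg (asymm hjk), if_pos hjk, if_neg (asymm hjk), if_pos hjk,
        if_neg hj, if_pos rfl, if_pos rfl]
      have e1 : μ j + -μ k = -(-(μ j - μ k)) := by ring
      have e2 : μ j - -μ k = -(-(μ j + μ k)) := by ring
      rw [e1, e2, neg_neg, neg_neg]; ring
  · rcases eq_or_ne j c with rfl | hj
    · have hkj : k < j := hc k hk
      rw [G, G, if_pos hkj, if_pos hkj, if_neg hk, if_pos rfl]
      have e1 : μ k - -μ j = μ k + μ j := by ring
      have e2 : μ k + -μ j = μ k - μ j := by ring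
      rw [e1, e2, if_neg hk]; ring
    · rw [G, G, if_neg hk, if_neg hk, if_neg hj]; ring_nf

section part3
variable {n : ℕ} [NeZero n]

lemma wg_eq_swap (i : Fin n) (hi : (i : ℕ) ≠ n - 1) (x : Fin n → ℤ) :
    wg n i x = x ∘ (Equiv.swap i (Fin.ofNat n ((i : ℕ) + 1 : ℕ))) := by
  have hi1 : (i : ℕ) + 1 < n := by have := i.isLt; omega
  set b : Fin n := Fin.ofNat n ((i : ℕ) + 1 : ℕ) with hbdef
  have hb : (b : ℕ) = (i : ℕ) + 1 := by rw [hbdef]; simp [Nat.mod_eq_of_lt hi1]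
  funext j
  have hwg : wg n i x j = if (j : ℕ) = (i : ℕ) then x b
      else if (j : ℕ) = (i : ℕ) + 1 then x i else x j := by
    rw [wg, if_neg hi]
  rw [hwg]
  by_cases hj : j = i
  · have h1 : (j : ℕ) = (i : ℕ) := by rw [hj]
    rw [if_pos h1, Function.comp_apply, hj, Equiv.swap_apply_left]
  · have hj' : (j : ℕ) ≠ (i : ℕ) := fun h => hj (Fin.ext h)
    by_cases hj2 : j = b
    · have h2 : (j : ℕ) = (i : ℕ) + 1 := by rw [hj2, hb]
      rw [if_neg hj', if_pos h2, Function.comp_apply, hj2, Equiv.swap_apply_right]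
    · have h2 : (j : ℕ) ≠ (i : ℕ) + 1 := fun h => hj2 (Fin.ext (by rw [hb, h]))
      rw [if_neg hj', if_neg h2, Function.comp_apply, Equiv.swap_apply_of_ne_of_ne hj hj2]

lemma wg_eq_neg (i : Fin n) (hi : (i : ℕ) = n - 1) (x : Fin n → ℤ) :
    wg n i x = fun j => if j = i then -(x j) else x j := by
  funext j
  have hwg : wg n i x j = if (j : ℕ) = n - 1 then -(x j) else x j := by
    rw [wg, if_pos hi]
  rw [hwg]
  by_cases hj : j = i
  · have h1 : (j : ℕ) = n - 1 := by rw [hj, hi]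
    rw [if_pos h1, if_pos hj]
  · have h1 : (j : ℕ) ≠ n - 1 := fun h => hj (Fin.ext (by rw [h, hi]))
    rw [if_neg h1, if_neg hj]

lemma last_max (i : Fin n) (hi : (i : ℕ) = n - 1) : ∀ x : Fin n, x ≠ i → x < i := by
  intro x hx
  have := x.isLt
  have hx' : (x : ℕ) ≠ (i : ℕ) := fun h => hx (Fin.ext h)
  rw [Fin.lt_def]; omega

lemma wg_rhoMlam (i : Fin n) (μ : Fin n → ℤ) (hne : wg n i μ ≠ μ) :
    rhoMlam (wg n i μ) = wg n i (rhoMlam μ) := by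
  by_cases hi : (i : ℕ) = n - 1
  · rw [wg_eq_neg i hi, wg_eq_neg i hi]
    funext k
    rw [rhoMlam_apply]
    have : ∀ j, G (fun x => if x = i then -(μ x) else μ x) k j
        = (if k = i then -1 else 1) * G μ k j := fun j => G_neg μ i (last_max i hi) k j
    rw [Finset.sum_congr rfl (fun j _ => this j), ← Finset.mul_sum, ← rhoMlam_apply]
    by_cases hk : k = i <;> simp [hk]
  · rw [wg_eq_swap i hi, wg_eq_swap i hi]
    set b : Fin n := Fin.ofNat n ((i : ℕ) + 1 : ℕ) with hbdef
    have hi1 : (i : ℕ) + 1 < n := by have := i.isLt; omega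
    have hb : (b : ℕ) = (i : ℕ) + 1 := by rw [hbdef]; simp [Nat.mod_eq_of_lt hi1]
    have hμ : μ i ≠ μ b := by
      intro h
      apply hne
      rw [wg_eq_swap i hi, ← hbdef]
      funext x
      by_cases hx : x = i
      · simp [hx, Equiv.swap_apply_left, ← hbdef, ← h]
      · by_cases hx2 : x = b
        · simp [hx2, Equiv.swap_apply_right, ← hbdef, h]
        · simp [Function.comp_apply, Equiv.swap_apply_of_ne_of_ne hx hx2, ← hbdef]
    funext k
    rw [rhoMlam_apply]
    calc ∑ j : Fin n, G (μ ∘ (Equiv.swap i b)) k j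
        = ∑ j : Fin n, G μ (Equiv.swap i b k) (Equiv.swap i b j) :=
          Finset.sum_congr rfl (fun j _ => G_swap μ i b hb hμ k j)
      _ = ∑ j : Fin n, G μ (Equiv.swap i b k) j := Equiv.sum_comp _ _
      _ = rhoMlam μ (Equiv.swap i b k) := (rhoMlam_apply _ _).symm
      _ = (rhoMlam μ ∘ (Equiv.swap i b)) k := rfl

lemma wg_rhoLlam (i : Fin n) (μ : Fin n → ℤ) (hne : wg n i μ ≠ μ) :
    rhoLlam (wg n i μ) = wg n i (rhoLlam μ) := by
  by_cases hi : (i : ℕ) = n - 1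
  · rw [wg_eq_neg i hi, wg_eq_neg i hi]
    have hμ : μ i ≠ 0 := by
      intro h
      apply hne
      rw [wg_eq_neg i hi]
      funext x
      by_cases hx : x = i <;> simp [hx, h]
    funext k
    simp only [rhoLlam_apply]
    by_cases hk : k = i
    · rw [if_pos hk, if_pos hk]
      have e1 : (2 : ℤ) * -μ k = -(2 * μ k) := by ring
      rw [e1, epsign_neg (by rw [hk]; intro h; exact hμ (by omega))]
    · rw [if_neg hk, if_neg hk]
  · rw [wg_eq_swap i hi, wg_eq_swap i hi]
    funext k
    simp only [rhoLlam_apply, Function.comp_apply]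

lemma rhoMlam_dominant (μ : Fin n → ℤ) (h : Dominant μ) : rhoMlam μ = rhoM n := by
  funext k
  rw [rhoMlam_apply]
  have hG : ∀ j, G μ k j = if k < j then 2 else 0 := by
    intro j
    rcases lt_trichotomy k j with hkj | hkj | hkj
    · rw [G, if_pos hkj, if_pos hkj,
        epsign_nonneg (sub_nonneg.2 (h.1 k j (le_of_lt hkj))),
        epsign_nonneg (add_nonneg (h.2 k) (h.2 j))]
      norm_num
    · rw [G, if_neg (by rw [hkj]; exact lt_irrefl j), if_neg (by rw [hkj]; exact lt_irrefl j),
        if_neg (by rw [hkj]; exact lt_irrefl j)]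
    · rw [G, if_neg (asymm hkj), if_pos hkj, if_neg (asymm hkj),
        epsign_nonneg (sub_nonneg.2 (h.1 j k (le_of_lt hkj))),
        epsign_nonneg (add_nonneg (h.2 j) (h.2 k))]
      ring
  rw [Finset.sum_congr rfl (fun j _ => hG j), ← Finset.sum_filter]
  have hfil : Finset.filter (fun j => k < j) Finset.univ = Finset.Ioi k := by
    ext x; simp
  rw [hfil, Finset.sum_const, Fin.card_Ioi]
  have hk := k.isLt
  have hn : 1 ≤ n := Nat.one_le_iff_ne_zero.2 (NeZero.ne n)
  rw [rhoM]
  have : ((n - 1 - (k : ℕ) : ℕ) : ℤ) = (n : ℤ) - 1 - (k : ℕ) := by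
    push_cast [Nat.cast_sub (by omega : (k:ℕ) ≤ n - 1), Nat.cast_sub hn]
    ring
  rw [nsmul_eq_mul, this]
  ring

lemma rhoLlam_dominant (μ : Fin n → ℤ) (h : Dominant μ) : rhoLlam μ = rhoL n := by
  funext k
  rw [rhoLlam_apply, rhoL, epsign_nonneg (by have := h.2 k; omega)]

end part3

/-- ρ_m(λ) = w_λ ρ_m and ρ_l(λ) = w_λ ρ_l, where w_λ ∈ W is the (unique)
minimal-length element with λ = w_λ λ⁺ (here represented by any word ω of minimal
length among words sending the dominant representative λ⁺ to λ). -/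
theorem stmt10 (n : ℕ) (hn : 2 ≤ n) [NeZero n] (lam lamp : Fin n → ℤ)
    (hdom : Dominant lamp) (ω : List (Fin n)) (hω : wwprod n ω lamp = lam)
    (hmin : ∀ ω' : List (Fin n), wwprod n ω' lamp = lam → ω.length ≤ ω'.length) :
    rhoMlam lam = wwprod n ω (rhoM n) ∧ rhoLlam lam = wwprod n ω (rhoL n) := by
  induction ω generalizing lam with
  | nil =>
    have hlam : lamp = lam := hω
    subst hlam
    exact ⟨rhoMlam_dominant lamp hdom, rhoLlam_dominant lamp hdom⟩
  | cons i ω' ih =>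
    have hcons : ∀ (l : List (Fin n)) (x : Fin n → ℤ),
        wwprod n (i :: l) x = wg n i (wwprod n l x) := fun _ _ => rfl
    set μ := wwprod n ω' lamp with hμdef
    have hlam : wg n i μ = lam := by rw [← hcons ω']; exact hω
    have hne : wg n i μ ≠ μ := by
      intro h
      have hμl : wwprod n ω' lamp = lam := by rw [← hμdef, ← h, hlam]
      have := hmin ω' hμl
      simp at this
    have hmin' : ∀ ω'' : List (Fin n), wwprod n ω'' lamp = μ → ω'.length ≤ ω''.length := by
      intro ω'' h
      have h2 : wwprod n (i :: ω'') lamp = lam := by rw [hcons ω'', h, hlam]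
      have := hmin (i :: ω'') h2
      simpa using this
    obtain ⟨hM, hL⟩ := ih μ rfl hmin'
    constructor
    · rw [← hlam, wg_rhoMlam i μ hne, hM, hcons ω']
    · rw [← hlam, wg_rhoLlam i μ hne, hL, hcons ω']


end
end

section
/- Let T_i (i = 0,…,n) be the Noumi operators on ℂ[x_1^{±1},…,x_n^{±1}]: T_i = t_{a_i} s_i + ((t_{a_i} − t_{a_i}^{−1}) + (t_{a_i/2} − t_{a_i/2}^{−1}) x^{a_i/2})/(1 − x^{a_i}) · (id − s_i), where the s_i act by (s_0 f)(x) = f(q x_1^{−1}, x_2,…,x_n), s_i swaps x_i and x_{i+1} for 1 ≤ i ≤ n−1, and (s_n f)(x) = f(x_1,…,x_{n−1},x_n^{−1}). Then each T_i satisfies the quadratic relation (T_i − t_{a_i})(T_i + t_{a_i}^{−1}) = 0 as an operator on Laurent polynomials. -/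
noncomputable section

open Fin.NatCast

/-- The action of the simple reflections s_0,…,s_n of type C̃_n on points
x ∈ (ℂ^×)^n (0-based coordinates): (s_0 f)(x) = f(q x_1^{-1}, x_2, …),
s_i swaps x_i, x_{i+1} (1 ≤ i ≤ n−1), (s_n f)(x) = f(…, x_n^{-1}). -/
def psub (n : ℕ) [NeZero n] (q : ℂ) (i : Fin (n + 1)) (x : Fin n → ℂ) : Fin n → ℂ :=
  fun j =>
    if (i : ℕ) = 0 then (if (j : ℕ) = 0 then q * (x j)⁻¹ else x j)
    else if (i : ℕ) = n then (if (j : ℕ) = n - 1 then (x j)⁻¹ else x j)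
    else if (j : ℕ) = (i : ℕ) - 1 then x (((i : ℕ) : Fin n))
    else if (j : ℕ) = (i : ℕ) then x ((((i : ℕ) - 1 : ℕ) : Fin n))
    else x j

/-- The value of x^{a_i} at x: x^{a_0} = q x_1^{-2}, x^{a_i} = x_i x_{i+1}^{-1},
x^{a_n} = x_n². -/
def xav (n : ℕ) [NeZero n] (q : ℂ) (i : Fin (n + 1)) (x : Fin n → ℂ) : ℂ :=
  if (i : ℕ) = 0 then q * ((x ((0 : ℕ) : Fin n))⁻¹) ^ 2
  else if (i : ℕ) = n then (x (((n - 1 : ℕ) : Fin n))) ^ 2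
  else x ((((i : ℕ) - 1 : ℕ) : Fin n)) * (x (((i : ℕ) : Fin n)))⁻¹

/-- Evaluation of a Laurent polynomial (an element of the group algebra ℂ[ℤ^n]) at a
point x ∈ (ℂ^×)^n. -/
def laurentEval {n : ℕ} (p : AddMonoidAlgebra ℂ (Fin n → ℤ)) (x : Fin n → ℂ) : ℂ :=
  p.coeff.sum fun μ c => c * ∏ i, (x i) ^ (μ i)

/-- The Noumi operator
T_i = t_{a_i} s_i + ((t_{a_i} − t_{a_i}^{−1}) + (t_{a_i/2} − t_{a_i/2}^{−1}) x^{a_i/2})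
      /(1 − x^{a_i}) · (id − s_i),
acting pointwise on functions; `sq i x` denotes the value of x^{a_i/2} at x. -/
def noumiT (n : ℕ) [NeZero n] (q : ℂ) (t u : Fin (n + 1) → ℂ)
    (sq : Fin (n + 1) → (Fin n → ℂ) → ℂ) (i : Fin (n + 1))
    (f : (Fin n → ℂ) → ℂ) : (Fin n → ℂ) → ℂ :=
  fun x => t i * f (psub n q i x) +
    (((t i - (t i)⁻¹) + (u i - (u i)⁻¹) * sq i x) / (1 - xav n q i x)) *
      (f x - f (psub n q i x))

/-! The operator `T_i` only involves `f` at `x` and at `s_i x`, and `s_i` is an involution.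
For any involution `σ`, an operator `T f = t (f ∘ σ) + c (f - f ∘ σ)` satisfies
`T² = (t - t⁻¹) T + 1` as soon as `c + c ∘ σ = t - t⁻¹`. For the Noumi coefficient
`c = ((t - t⁻¹) + (u - u⁻¹) s) / (1 - s²)` with `s = x^{a_i/2}` this holds because
`s_i` inverts `s`, and `(a + b s)/(1 - s²) + (a + b s⁻¹)/(1 - s⁻²) = a`. -/

def reflectionOp {X K : Type*} [Mul K] [Sub K] [Add K] (σ : X → X) (t : K) (c : X → K)
    (f : X → K) : X → K :=
  fun x => t * f (σ x) + c x * (f x - f (σ x))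

theorem reflectionOp_reflectionOp_apply {X K : Type*} [Field K] {σ : X → X} {t : K} (ht : t ≠ 0)
    {c : X → K} {x : X} (hσ : σ (σ x) = x) (hc : c x + c (σ x) = t - t⁻¹) (f : X → K) :
    reflectionOp σ t c (reflectionOp σ t c f) x =
      (t - t⁻¹) * reflectionOp σ t c f x + f x := by
  simp only [reflectionOp, hσ]
  linear_combination (f x - f (σ x)) * (c x - t) * hc + f x * inv_mul_cancel₀ ht

theorem div_one_sub_sq_add_div_one_sub_inv_sq {K : Type*} [Field K] (a b : K) {s : K}
    (hs : s ≠ 0) (hs1 : 1 - s ^ 2 ≠ 0) :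
    (a + b * s) / (1 - s ^ 2) + (a + b * s⁻¹) / (1 - s⁻¹ ^ 2) = a := by
  have hs1' : s ^ 2 - 1 ≠ 0 := by rwa [← neg_ne_zero, neg_sub]
  field_simp
  ring

theorem psub_psub {n : ℕ} [NeZero n] {q : ℂ} (hq : q ≠ 0) (i : Fin (n + 1))
    {x : Fin n → ℂ} (hx : ∀ j, x j ≠ 0) : psub n q i (psub n q i x) = x := by
  funext j
  by_cases h0 : (i : ℕ) = 0
  · simp only [psub, h0, if_true]
    split_ifs
    · field_simp [hx j]
    · rfl
  by_cases hn : (i : ℕ) = n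
  · simp only [psub, if_neg h0, if_pos hn]
    split_ifs <;> simp
  have hi : ((i : ℕ) : Fin n).val = i := Fin.val_cast_of_lt (by omega)
  have hi' : (((i : ℕ) - 1 : ℕ) : Fin n).val = i - 1 := Fin.val_cast_of_lt (by omega)
  simp only [psub, h0, hn, if_false]
  split_ifs <;> first | omega | rfl | exact congrArg x (Fin.ext (by omega))

theorem xav_ne_zero {n : ℕ} [NeZero n] {q : ℂ} (hq : q ≠ 0) (i : Fin (n + 1))
    {x : Fin n → ℂ} (hx : ∀ j, x j ≠ 0) : xav n q i x ≠ 0 := by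
  unfold xav
  split_ifs
  · exact mul_ne_zero hq (pow_ne_zero _ (inv_ne_zero (hx _)))
  · exact pow_ne_zero _ (hx _)
  · exact mul_ne_zero (hx _) (inv_ne_zero (hx _))

theorem noumiT_eq_reflectionOp (n : ℕ) [NeZero n] (q : ℂ) (t u : Fin (n + 1) → ℂ)
    (sq : Fin (n + 1) → (Fin n → ℂ) → ℂ) (i : Fin (n + 1)) :
    noumiT n q t u sq i = reflectionOp (psub n q i) (t i)
      (fun x => ((t i - (t i)⁻¹) + (u i - (u i)⁻¹) * sq i x) / (1 - xav n q i x)) :=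
  rfl

theorem stmt14_general (n : ℕ) [NeZero n] (q : ℂ) (hq : q ≠ 0)
    (t u : Fin (n + 1) → ℂ) (ht : ∀ i, t i ≠ 0)
    (sq : Fin (n + 1) → (Fin n → ℂ) → ℂ)
    (hsq2 : ∀ i x, (sq i x) ^ 2 = xav n q i x)
    (hsqs : ∀ i x, (∀ j, x j ≠ 0) → sq i (psub n q i x) = (sq i x)⁻¹)
    (i : Fin (n + 1)) (p : AddMonoidAlgebra ℂ (Fin n → ℤ))
    (x : Fin n → ℂ) (hx : ∀ j, x j ≠ 0)
    (hd1 : 1 - xav n q i x ≠ 0) :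
    noumiT n q t u sq i (noumiT n q t u sq i (laurentEval p)) x =
      (t i - (t i)⁻¹) * noumiT n q t u sq i (laurentEval p) x + laurentEval p x := by
  have hs : sq i x ≠ 0 := fun h0 =>
    xav_ne_zero hq i hx (by rw [← hsq2, h0, zero_pow two_ne_zero])
  have hcoeff := div_one_sub_sq_add_div_one_sub_inv_sq (t i - (t i)⁻¹) (u i - (u i)⁻¹) hs
    (by rwa [hsq2])
  rw [← hsqs i x hx, hsq2, hsq2] at hcoeff
  rw [noumiT_eq_reflectionOp]
  exact reflectionOp_reflectionOp_apply (ht i) (psub_psub hq i hx) hcoeff (laurentEval p)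

/-- each Noumi operator T_i satisfies the quadratic relation
(T_i − t_{a_i})(T_i + t_{a_i}^{−1}) = 0, i.e. T_i² = (t_{a_i} − t_{a_i}^{−1})T_i + 1,
as an operator on Laurent polynomials (identity of rational functions, evaluated at
every point where the expressions are defined).  Here t i = t_{a_i}, u i = t_{a_i/2}
(so u i = 1 for 1 ≤ i ≤ n−1 since a_i/2 is not a root), and sq i x is the value of
x^{a_i/2}, satisfying sq² = x^{a_i} and s_i-equivariance. -/
theorem stmt14 (n : ℕ) (hn : 2 ≤ n) [NeZero n] (q : ℂ) (hq : q ≠ 0)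
    (t u : Fin (n + 1) → ℂ) (ht : ∀ i, t i ≠ 0) (hu : ∀ i, u i ≠ 0)
    (humid : ∀ i : Fin (n + 1), 0 < (i : ℕ) → (i : ℕ) < n → u i = 1)
    (sq : Fin (n + 1) → (Fin n → ℂ) → ℂ)
    (hsq2 : ∀ i x, (sq i x) ^ 2 = xav n q i x)
    (hsqs : ∀ i x, (∀ j, x j ≠ 0) → sq i (psub n q i x) = (sq i x)⁻¹)
    (i : Fin (n + 1)) (p : AddMonoidAlgebra ℂ (Fin n → ℤ))
    (x : Fin n → ℂ) (hx : ∀ j, x j ≠ 0)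
    (hd1 : 1 - xav n q i x ≠ 0) (hd2 : 1 - xav n q i (psub n q i x) ≠ 0) :
    noumiT n q t u sq i (noumiT n q t u sq i (laurentEval p)) x =
      (t i - (t i)⁻¹) * noumiT n q t u sq i (laurentEval p) x + laurentEval p x :=
  stmt14_general n q hq t u ht sq hsq2 hsqs i p x hx hd1

end
end

section
/- The five sets 𝒲a_0^∨ = (1/2 + ℤ)δ + Σ_s, 𝒲a_0 = (1 + 2ℤ)δ + Σ_l, 𝒲a_i = ℤδ + Σ_m (any 1 ≤ i ≤ n−1), 𝒲a_n^∨ = ℤδ + Σ_s, and 𝒲a_n = 2ℤδ + Σ_l are precisely the orbits of the affine Weyl group 𝒲 acting on the affine root system S of type C^∨C_n, and they partition S. -/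
noncomputable section

/-- V̂ = ℝ^n ⊕ ℝδ, modeled as (vector part, coefficient of δ). -/
abbrev Vh (n : ℕ) := (Fin n → ℝ) × ℝ

/-- Inner product on V̂ with δ in the radical. -/
def ipa {n : ℕ} (f g : Vh n) : ℝ := ∑ i, f.1 i * g.1 i

/-- Standard basis vector ε_i. -/
def epsr {n : ℕ} (i : Fin n) : Fin n → ℝ := fun j => if j = i then 1 else 0

/-- The simple affine roots a_0 = δ − 2ε_1, a_i = ε_i − ε_{i+1} (1 ≤ i ≤ n−1),
a_n = 2ε_n of the affine root system R of type C̃_n (0-based coordinates). -/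
def aroot (n : ℕ) (i : Fin (n + 1)) : Vh n :=
  if (i : ℕ) = 0 then ((fun j => if (j : ℕ) = 0 then -2 else 0), 1)
  else if (i : ℕ) = n then ((fun j => if (j : ℕ) = n - 1 then 2 else 0), 0)
  else ((fun j => if (j : ℕ) = (i : ℕ) - 1 then 1 else if (j : ℕ) = (i : ℕ) then -1 else 0), 0)

/-- Reflection in the affine root β: s_β(g) = g − ⟨g,β^∨⟩β. -/
def arefl {n : ℕ} (β g : Vh n) : Vh n := g - (2 * ipa g β / ipa β β) • β

/-- The simple reflections s_0, …, s_n. -/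
def sref (n : ℕ) (i : Fin (n + 1)) : Vh n → Vh n := arefl (aroot n i)

/-- Product of simple reflections: wprod [i₁,…,i_r] = s_{i₁} ∘ ⋯ ∘ s_{i_r}. -/
def wprod (n : ℕ) (ω : List (Fin (n + 1))) : Vh n → Vh n :=
  ω.foldr (fun i f => sref n i ∘ f) id

/-- Σ_s = {±ε_i}. -/
def SigS (n : ℕ) : Set (Fin n → ℝ) :=
  {v | ∃ (s : ℝ) (i : Fin n), (s = 1 ∨ s = -1) ∧ v = s • epsr i}

/-- Σ_m = {±ε_i ± ε_j : i < j}. -/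
def SigM (n : ℕ) : Set (Fin n → ℝ) :=
  {v | ∃ (s u : ℝ) (i j : Fin n), (s = 1 ∨ s = -1) ∧ (u = 1 ∨ u = -1) ∧ i < j ∧
        v = s • epsr i + u • epsr j}

/-- Σ_l = {±2ε_i}. -/
def SigL (n : ℕ) : Set (Fin n → ℝ) :=
  {v | ∃ (s : ℝ) (i : Fin n), (s = 1 ∨ s = -1) ∧ v = (2 * s) • epsr i}

/-- The affine root system S of type C^∨C_n. -/
def Sset (n : ℕ) : Set (Vh n) :=
  {p | (∃ m : ℤ, p.2 = (m : ℝ) / 2 ∧ p.1 ∈ SigS n) ∨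
       (∃ m : ℤ, p.2 = (m : ℝ) ∧ p.1 ∈ SigL n) ∨
       (∃ m : ℤ, p.2 = (m : ℝ) ∧ p.1 ∈ SigM n)}

/-- The 𝒲-orbit of β, 𝒲 being generated by the simple reflections s_0,…,s_n. -/
def orbitW (n : ℕ) (β : Vh n) : Set (Vh n) :=
  {g | ∃ ω : List (Fin (n + 1)), wprod n ω β = g}

/-- (1/2 + ℤ)δ + Σ_s. -/
def Oov (n : ℕ) : Set (Vh n) := {p | (∃ m : ℤ, p.2 = (m : ℝ) + 1/2) ∧ p.1 ∈ SigS n}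
/-- (1 + 2ℤ)δ + Σ_l. -/
def Oo (n : ℕ) : Set (Vh n) := {p | (∃ m : ℤ, p.2 = 2*(m : ℝ) + 1) ∧ p.1 ∈ SigL n}
/-- ℤδ + Σ_m. -/
def Om (n : ℕ) : Set (Vh n) := {p | (∃ m : ℤ, p.2 = (m : ℝ)) ∧ p.1 ∈ SigM n}
/-- ℤδ + Σ_s. -/
def Onv (n : ℕ) : Set (Vh n) := {p | (∃ m : ℤ, p.2 = (m : ℝ)) ∧ p.1 ∈ SigS n}
/-- 2ℤδ + Σ_l. -/
def On (n : ℕ) : Set (Vh n) := {p | (∃ m : ℤ, p.2 = 2*(m : ℝ)) ∧ p.1 ∈ SigL n}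

/-- a_0^∨ = a_0/2 = δ/2 − ε_1. -/
def a0v (n : ℕ) : Vh n := ((fun j => if (j : ℕ) = 0 then -1 else 0), 1/2)
/-- a_n^∨ = a_n/2 = ε_n. -/
def anv (n : ℕ) : Vh n := ((fun j => if (j : ℕ) = n - 1 then 1 else 0), 0)

namespace S16
variable {m : ℕ}

def Rel (n : ℕ) (p q : Vh n) : Prop := ∃ ω, wprod n ω p = q

lemma wprod_cons (n : ℕ) (i : Fin (n+1)) (ω : List (Fin (n+1))) (p : Vh n) :
    wprod n (i :: ω) p = sref n i (wprod n ω p) := rfl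

lemma wprod_append (n : ℕ) (ω₁ ω₂ : List (Fin (n+1))) (p : Vh n) :
    wprod n (ω₁ ++ ω₂) p = wprod n ω₁ (wprod n ω₂ p) := by
  induction ω₁ with
  | nil => rfl
  | cons a l ih => simp [List.cons_append, wprod_cons, ih]

lemma Rel.refl (n : ℕ) (p : Vh n) : Rel n p p := ⟨[], rfl⟩

lemma Rel.trans {n : ℕ} {p q r : Vh n} (h1 : Rel n p q) (h2 : Rel n q r) : Rel n p r := by
  obtain ⟨a, ha⟩ := h1; obtain ⟨b, hb⟩ := h2
  exact ⟨b ++ a, by rw [wprod_append, ha, hb]⟩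

/-- index 0 of Fin (m+2) -/
def i0 : Fin (m+2) := ⟨0, by omega⟩
/-- last index of Fin (m+2) -/
def iL : Fin (m+2) := ⟨m+1, by omega⟩
/-- middle simple-reflection indices -/
def mid (i : Fin (m+1)) : Fin (m+3) := ⟨(i:ℕ)+1, by omega⟩

lemma fin_coe_eq {k c : ℕ} (h : c < k) (j : Fin k) : ((j:ℕ) = c) ↔ (j = ⟨c, h⟩) := by
  simp [Fin.ext_iff]

lemma sum_ite_mul {k : ℕ} (v : Fin k → ℝ) (i : Fin k) (a : ℝ) :
    ∑ j, v j * (if j = i then a else 0) = v i * a := by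
  rw [Finset.sum_eq_single i] <;> simp +contextual

lemma G0 (v : Fin (m+2) → ℝ) (c : ℝ) :
    sref (m+2) 0 (v, c) = (Function.update v i0 (-(v i0)), c + v i0) := by
  have ha : aroot (m+2) 0 = ((fun j => if j = (i0 : Fin (m+2)) then -2 else 0), 1) := by
    rw [aroot]
    simp only [Fin.val_zero, if_true, reduceIte]
    rw [Prod.ext_iff]
    refine ⟨funext fun j => ?_, rfl⟩
    show (if (j:ℕ) = 0 then (-2:ℝ) else 0) = if j = i0 then -2 else 0
    by_cases h : j = i0
    · rw [if_pos h, if_pos (show (j:ℕ) = 0 from congrArg Fin.val h)]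
    · rw [if_neg h, if_neg (fun (e : (j:ℕ) = 0) => h (Fin.ext e))]
  rw [sref, arefl, ha, ipa, ipa]
  simp only [sum_ite_mul]
  norm_num
  refine ⟨funext fun j => ?_, ?_⟩
  · by_cases h : j = i0 <;> simp [h, Function.update_apply] <;> ring
  · ring
lemma lemGL (v : Fin (m+2) → ℝ) (c : ℝ) :
    sref (m+2) (Fin.last (m+2)) (v, c) = (Function.update v iL (-(v iL)), c) := by
  have ha : aroot (m+2) (Fin.last (m+2)) = ((fun j => if j = (iL : Fin (m+2)) then 2 else 0), 0) := by
    rw [aroot]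
    have h1 : ((Fin.last (m+2) : Fin (m+3)) : ℕ) = m+2 := rfl
    rw [h1, if_neg (by omega), if_pos rfl]
    simp only [Prod.mk.injEq]
    refine ⟨funext fun j => ?_, trivial⟩
    simp [fin_coe_eq (show m+1 < m+2 by omega) j, iL]
    split_ifs <;> simp_all [Fin.ext_iff]
  rw [sref, arefl, ha, ipa, ipa]
  simp only [sum_ite_mul]
  norm_num
  funext j
  by_cases h : j = iL <;> simp [h, Function.update_apply] <;> ring

lemma ite2 {k : ℕ} (a b : Fin k) (hab : a ≠ b) (x y : ℝ) (j : Fin k) :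
    (if j = a then x else if j = b then y else 0)
      = (if j = a then x else 0) + (if j = b then y else 0) := by
  by_cases h1 : j = a
  · subst h1; simp [if_neg (by exact hab)]
  · simp [h1]

lemma lemGM (i : Fin (m+1)) (v : Fin (m+2) → ℝ) (c : ℝ) :
    sref (m+2) (mid i) (v, c) = (v ∘ Equiv.swap i.castSucc i.succ, c) := by
  have hne : (i.castSucc : Fin (m+2)) ≠ i.succ := by
    simp [Fin.ext_iff]
  have ha : aroot (m+2) (mid i)
      = ((fun j => (if j = (i.castSucc : Fin (m+2)) then 1 else 0)
          + (if j = (i.succ : Fin (m+2)) then -1 else 0)), 0) := by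
    rw [aroot]
    have h1 : ((mid i : Fin (m+3)) : ℕ) = (i:ℕ)+1 := rfl
    rw [h1]
    rw [if_neg (by omega), if_neg (by omega)]
    simp only [Prod.mk.injEq]
    refine ⟨funext fun j => ?_, trivial⟩
    rw [show (i:ℕ)+1-1 = (i:ℕ) by omega]
    have e1 : (⟨(i:ℕ), by omega⟩ : Fin (m+2)) = i.castSucc := by simp [Fin.ext_iff]
    have e2 : (⟨(i:ℕ)+1, by omega⟩ : Fin (m+2)) = i.succ := by simp [Fin.ext_iff]
    simp only [fin_coe_eq (show (i:ℕ) < m+2 by omega) j,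
      fin_coe_eq (show (i:ℕ)+1 < m+2 by omega) j, e1, e2]
    exact ite2 _ _ hne _ _ j
  rw [sref, arefl, ha, ipa, ipa]
  have hsum : ∀ w : Fin (m+2) → ℝ, (∑ j, w j * ((if j = (i.castSucc : Fin (m+2)) then (1:ℝ) else 0)
      + (if j = (i.succ : Fin (m+2)) then -1 else 0))) = w i.castSucc - w i.succ := by
    intro w
    simp only [mul_add, Finset.sum_add_distrib, sum_ite_mul]
    ring
  rw [hsum, hsum]
  norm_num [hne, Ne.symm hne]
  funext j
  rcases eq_or_ne j i.castSucc with h | h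
  · subst h
    simp [Equiv.swap_apply_left, if_neg hne]
  · rcases eq_or_ne j i.succ with h2 | h2
    · subst h2
      simp [Equiv.swap_apply_right, if_neg (Ne.symm hne), h]
    · simp [Equiv.swap_apply_of_ne_of_ne h h2, if_neg h, if_neg h2]

lemma fin_cases3 (i : Fin (m+3)) :
    i = 0 ∨ i = Fin.last (m+2) ∨ ∃ k : Fin (m+1), i = mid k := by
  rcases Nat.eq_zero_or_pos (i:ℕ) with h | h
  · left; simp [Fin.ext_iff, h]
  · rcases eq_or_ne (i:ℕ) (m+2) with h2 | h2
    · right; left; simp [Fin.ext_iff, h2]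
    · right; right
      refine ⟨⟨(i:ℕ)-1, by omega⟩, ?_⟩
      simp only [mid, Fin.ext_iff]
      omega

lemma sref_invol (i : Fin (m+3)) (p : Vh (m+2)) :
    sref (m+2) i (sref (m+2) i p) = p := by
  obtain ⟨v, c⟩ := p
  rcases fin_cases3 i with h | h | ⟨k, h⟩ <;> subst h
  · rw [G0, G0]
    simp only [Function.update_self]
    rw [Function.update_idem, neg_neg, Function.update_eq_self]
    simp
  · rw [lemGL, lemGL]
    simp only [Function.update_self]
    rw [Function.update_idem, neg_neg, Function.update_eq_self]
  · rw [lemGM, lemGM]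
    simp only [Prod.mk.injEq]
    refine ⟨funext fun j => ?_, trivial⟩
    simp [Function.comp, Equiv.swap_apply_self]

lemma wprod_reverse (ω : List (Fin (m+3))) (p : Vh (m+2)) :
    wprod (m+2) ω.reverse (wprod (m+2) ω p) = p := by
  induction ω generalizing p with
  | nil => rfl
  | cons a l ih =>
    rw [wprod_cons, List.reverse_cons, wprod_append]
    have h1 : wprod (m+2) [a] (sref (m+2) a (wprod (m+2) l p)) = wprod (m+2) l p :=
      sref_invol a _
    rw [h1, ih]

lemma Rel.symm {p q : Vh (m+2)} (h : Rel (m+2) p q) : Rel (m+2) q p := by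
  obtain ⟨ω, rfl⟩ := h
  exact ⟨ω.reverse, wprod_reverse ω p⟩

lemma permRel (v : Fin (m+2) → ℝ) (c : ℝ) (π : Equiv.Perm (Fin (m+2))) :
    Rel (m+2) (v, c) (v ∘ π, c) := by
  have key : ∀ π ∈ Submonoid.closure
      (Set.range fun i : Fin (m+1) => Equiv.swap i.castSucc i.succ),
      ∀ (v : Fin (m+2) → ℝ) (c : ℝ), Rel (m+2) (v, c) (v ∘ π, c) := by
    intro π hπ
    induction hπ using Submonoid.closure_induction with
    | mem x hx =>
      obtain ⟨i, rfl⟩ := hx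
      intro v c
      exact ⟨[mid i], lemGM i v c⟩
    | one =>
      intro v c
      have : v ∘ ⇑(1 : Equiv.Perm (Fin (m+2))) = v := rfl
      rw [this]; exact Rel.refl _ _
    | mul a b _ _ ha hb =>
      intro v c
      have : v ∘ ⇑(a * b) = (v ∘ ⇑a) ∘ ⇑b := rfl
      rw [this]
      exact Rel.trans (ha v c) (hb (v ∘ ⇑a) c)
  have := Equiv.Perm.mclosure_swap_castSucc_succ (m+1)
  exact key π (this ▸ Submonoid.mem_top π) v c

lemma update_conj (v : Fin (m+2) → ℝ) (i t : Fin (m+2)) (a : ℝ) :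
    (Function.update (v ∘ Equiv.swap i t) t a) ∘ Equiv.swap i t
      = Function.update v i a := by
  funext j
  rcases eq_or_ne j i with h | h
  · subst h
    show Function.update (v ∘ Equiv.swap j t) t a (Equiv.swap j t j) = _
    rw [Equiv.swap_apply_left, Function.update_self, Function.update_self]
  · have hs : Equiv.swap i t j ≠ t := by
      intro hh
      apply h
      have h2 := congrArg (Equiv.swap i t) hh
      rwa [Equiv.swap_apply_self, Equiv.swap_apply_right] at h2
    simp [Function.comp_apply, Function.update_apply, if_neg hs, if_neg h,
      Equiv.swap_apply_self]

lemma swap_val (v : Fin (m+2) → ℝ) (i t : Fin (m+2)) :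
    (v ∘ Equiv.swap i t) t = v i := by
  simp [Equiv.swap_apply_right]

lemma negAt (v : Fin (m+2) → ℝ) (c : ℝ) (i : Fin (m+2)) :
    Rel (m+2) (v, c) (Function.update v i (-(v i)), c) := by
  have h1 := permRel v c (Equiv.swap i iL)
  have h2 : Rel (m+2) ((v ∘ Equiv.swap i iL : Fin (m+2) → ℝ), c)
      (Function.update (v ∘ Equiv.swap i iL) iL (-((v ∘ Equiv.swap i iL) iL)), c) :=
    ⟨[Fin.last (m+2)], lemGL _ c⟩
  have h3 := permRel (Function.update (v ∘ Equiv.swap i iL) iL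
      (-((v ∘ Equiv.swap i iL) iL))) c (Equiv.swap i iL)
  have h4 := (Rel.trans h1 (Rel.trans h2 h3))
  rwa [swap_val, update_conj] at h4

lemma shiftAt (v : Fin (m+2) → ℝ) (c : ℝ) (i : Fin (m+2)) :
    Rel (m+2) (v, c) (Function.update v i (-(v i)), c + v i) := by
  have h1 := permRel v c (Equiv.swap i i0)
  have h2 : Rel (m+2) ((v ∘ Equiv.swap i i0 : Fin (m+2) → ℝ), c)
      (Function.update (v ∘ Equiv.swap i i0) i0 (-((v ∘ Equiv.swap i i0) i0)),
        c + (v ∘ Equiv.swap i i0) i0) :=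
    ⟨[0], G0 _ c⟩
  have h3 := permRel (Function.update (v ∘ Equiv.swap i i0) i0
      (-((v ∘ Equiv.swap i i0) i0))) (c + (v ∘ Equiv.swap i i0) i0) (Equiv.swap i i0)
  have h4 := (Rel.trans h1 (Rel.trans h2 h3))
  rwa [swap_val, update_conj] at h4

-- epsr algebra
lemma eps_self (s : ℝ) (i : Fin (m+2)) : (s • epsr i) i = s := by simp [epsr]

lemma eps_ne (s : ℝ) {i j : Fin (m+2)} (h : j ≠ i) : (s • epsr i) j = 0 := by
  simp [epsr, h]

lemma update_eps (s a : ℝ) (i : Fin (m+2)) :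
    Function.update (s • epsr i) i a = a • epsr i := by
  funext j
  rcases eq_or_ne j i with h | h
  · subst h; simp [epsr, Function.update_self]
  · simp [Function.update_apply, h, epsr]

lemma eps_comp (s : ℝ) (i : Fin (m+2)) (π : Equiv.Perm (Fin (m+2))) :
    (s • epsr i) ∘ ⇑π = s • epsr (π.symm i) := by
  funext j
  simp only [Function.comp_apply, Pi.smul_apply, epsr, smul_eq_mul]
  congr 1
  by_cases h : π j = i
  · rw [if_pos h, if_pos (by rw [← h]; exact (Equiv.symm_apply_apply π j).symm)]
  · rw [if_neg h, if_neg (fun hh => h (by rw [hh]; exact Equiv.apply_symm_apply π i))]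

lemma update_pair (s u a : ℝ) {i j : Fin (m+2)} (h : i ≠ j) :
    Function.update (s • epsr i + u • epsr j) i a = a • epsr i + u • epsr j := by
  funext x
  rcases eq_or_ne x i with hx | hx
  · subst hx; simp [epsr, h]
  · simp [Function.update_apply, hx, epsr]

lemma pair_val_i (s u : ℝ) {i j : Fin (m+2)} (h : i ≠ j) :
    (s • epsr i + u • epsr j) i = s := by
  simp [epsr, h]

-- S-shape moves
lemma relS_flip (s : ℝ) (i : Fin (m+2)) (c : ℝ) :
    Rel (m+2) (s • epsr i, c) ((-s) • epsr i, c) := by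
  have h := negAt (s • epsr i) c i
  rwa [eps_self, update_eps] at h

lemma relS_shift (s : ℝ) (i : Fin (m+2)) (c : ℝ) :
    Rel (m+2) (s • epsr i, c) ((-s) • epsr i, c + s) := by
  have h := shiftAt (s • epsr i) c i
  rwa [eps_self, update_eps] at h

lemma relS_step (s : ℝ) (hs : s = 1 ∨ s = -1) (i : Fin (m+2)) (c : ℝ) :
    Rel (m+2) (s • epsr i, c) (s • epsr i, c + 1) := by
  rcases hs with h | h <;> subst h
  · have h1 := relS_shift 1 i c
    have h2 := relS_flip (-1) i (c + 1)
    rw [neg_neg] at h2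
    exact Rel.trans h1 h2
  · have h1 := relS_flip (-1) i c
    rw [neg_neg] at h1
    have h2 := relS_shift 1 i c
    exact Rel.trans h1 h2

lemma relS_int (s : ℝ) (hs : s = 1 ∨ s = -1) (i : Fin (m+2)) (c : ℝ) (t : ℤ) :
    Rel (m+2) (s • epsr i, c) (s • epsr i, c + t) := by
  induction t using Int.induction_on with
  | zero => simpa using Rel.refl _ _
  | succ k ih =>
    refine Rel.trans ih ?_
    have := relS_step s hs i (c + k)
    have he : (c + (k:ℝ)) + 1 = c + ((k:ℤ)+1 : ℤ) := by push_cast; ring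
    rwa [he] at this
  | pred k ih =>
    refine Rel.trans ih ?_
    have := relS_step s hs i (c + (-(k:ℤ)-1 : ℤ))
    have he : (c + ((-(k:ℤ)-1 : ℤ):ℝ)) + 1 = c + (-(k:ℤ) : ℤ) := by push_cast; ring
    rw [he] at this
    exact this.symm

lemma relS_full (s u : ℝ) (hs : s = 1 ∨ s = -1) (hu : u = 1 ∨ u = -1)
    (i j : Fin (m+2)) (c : ℝ) (t : ℤ) :
    Rel (m+2) (s • epsr i, c) (u • epsr j, c + t) := by
  refine Rel.trans (relS_int s hs i c t) ?_
  have hsgn : Rel (m+2) (s • epsr i, c + t) (u • epsr i, c + t) := by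
    rcases hs with h | h <;> rcases hu with h' | h' <;> subst h <;> subst h'
    · exact Rel.refl _ _
    · exact relS_flip 1 i _
    · have := relS_flip (-1) i ((c : ℝ) + t); rwa [neg_neg] at this
    · exact Rel.refl _ _
  refine Rel.trans hsgn ?_
  have := permRel (u • epsr i) ((c:ℝ) + t) (Equiv.swap i j)
  rwa [eps_comp, Equiv.symm_swap, Equiv.swap_apply_left] at this

-- L-shape moves
lemma relL_flip (s : ℝ) (i : Fin (m+2)) (c : ℝ) :
    Rel (m+2) ((2*s) • epsr i, c) ((2*(-s)) • epsr i, c) := by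
  have h := negAt ((2*s) • epsr i) c i
  rw [eps_self, update_eps] at h
  rwa [show -(2*s) = 2*(-s) by ring] at h

lemma relL_shift (s : ℝ) (i : Fin (m+2)) (c : ℝ) :
    Rel (m+2) ((2*s) • epsr i, c) ((2*(-s)) • epsr i, c + 2*s) := by
  have h := shiftAt ((2*s) • epsr i) c i
  rw [eps_self, update_eps] at h
  rwa [show -(2*s) = 2*(-s) by ring] at h

lemma relL_step (s : ℝ) (hs : s = 1 ∨ s = -1) (i : Fin (m+2)) (c : ℝ) :
    Rel (m+2) ((2*s) • epsr i, c) ((2*s) • epsr i, c + 2) := by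
  rcases hs with h | h <;> subst h
  · have h1 := relL_shift 1 i c
    have h2 := relL_flip (-1) i (c + 2*1)
    rw [neg_neg] at h2
    have := Rel.trans h1 h2
    rwa [show c + 2*1 = c + 2 by ring] at this
  · have h1 := relL_flip (-1) i c
    rw [neg_neg] at h1
    have h2 := relL_shift 1 i c
    have := Rel.trans h1 h2
    rwa [show c + 2*1 = c + 2 by ring] at this

lemma relL_int (s : ℝ) (hs : s = 1 ∨ s = -1) (i : Fin (m+2)) (c : ℝ) (t : ℤ) :
    Rel (m+2) ((2*s) • epsr i, c) ((2*s) • epsr i, c + 2*t) := by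
  induction t using Int.induction_on with
  | zero => simpa using Rel.refl _ _
  | succ k ih =>
    refine Rel.trans ih ?_
    have := relL_step s hs i (c + 2*k)
    have he : (c + 2*(k:ℝ)) + 2 = c + 2*((k:ℤ)+1 : ℤ) := by push_cast; ring
    rwa [he] at this
  | pred k ih =>
    refine Rel.trans ih ?_
    have := relL_step s hs i (c + 2*((-(k:ℤ)-1 : ℤ) : ℝ))
    have he : (c + 2*((-(k:ℤ)-1 : ℤ):ℝ)) + 2 = c + 2*((-(k:ℤ) : ℤ):ℝ) := by push_cast; ring
    rw [he] at this
    exact this.symm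

lemma relL_full (s u : ℝ) (hs : s = 1 ∨ s = -1) (hu : u = 1 ∨ u = -1)
    (i j : Fin (m+2)) (c : ℝ) (t : ℤ) :
    Rel (m+2) ((2*s) • epsr i, c) ((2*u) • epsr j, c + 2*t) := by
  refine Rel.trans (relL_int s hs i c t) ?_
  have hsgn : Rel (m+2) ((2*s) • epsr i, c + 2*t) ((2*u) • epsr i, c + 2*t) := by
    rcases hs with h | h <;> rcases hu with h' | h' <;> subst h <;> subst h'
    · exact Rel.refl _ _
    · have := relL_flip 1 i ((c:ℝ) + 2*t); rwa [] at this
    · have := relL_flip (-1) i ((c : ℝ) + 2*t); rwa [neg_neg] at this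
    · exact Rel.refl _ _
  refine Rel.trans hsgn ?_
  have := permRel ((2*u) • epsr i) ((c:ℝ) + 2*t) (Equiv.swap i j)
  rwa [eps_comp, Equiv.symm_swap, Equiv.swap_apply_left] at this

-- M-shape moves
lemma pair_comp (s u : ℝ) (i j : Fin (m+2)) (π : Equiv.Perm (Fin (m+2))) :
    (s • epsr i + u • epsr j) ∘ ⇑π = s • epsr (π.symm i) + u • epsr (π.symm j) := by
  have : (s • epsr i + u • epsr j) ∘ ⇑π
      = ((s • epsr i) ∘ ⇑π) + ((u • epsr j) ∘ ⇑π) := rfl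
  rw [this, eps_comp, eps_comp]

lemma relM_flip_i (s u : ℝ) {i j : Fin (m+2)} (h : i ≠ j) (c : ℝ) :
    Rel (m+2) (s • epsr i + u • epsr j, c) ((-s) • epsr i + u • epsr j, c) := by
  have hh := negAt (s • epsr i + u • epsr j) c i
  rwa [pair_val_i s u h, update_pair s u (-s) h] at hh

lemma relM_flip_j (s u : ℝ) {i j : Fin (m+2)} (h : i ≠ j) (c : ℝ) :
    Rel (m+2) (s • epsr i + u • epsr j, c) (s • epsr i + (-u) • epsr j, c) := by
  have hh := relM_flip_i u s h.symm c
  rwa [add_comm (u • epsr j), add_comm ((-u) • epsr j)] at hh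

lemma relM_shift_i (s u : ℝ) {i j : Fin (m+2)} (h : i ≠ j) (c : ℝ) :
    Rel (m+2) (s • epsr i + u • epsr j, c) ((-s) • epsr i + u • epsr j, c + s) := by
  have hh := shiftAt (s • epsr i + u • epsr j) c i
  rwa [pair_val_i s u h, update_pair s u (-s) h] at hh

lemma relM_step (s u : ℝ) (hs : s = 1 ∨ s = -1) {i j : Fin (m+2)} (h : i ≠ j) (c : ℝ) :
    Rel (m+2) (s • epsr i + u • epsr j, c) (s • epsr i + u • epsr j, c + 1) := by
  rcases hs with hh | hh <;> subst hh
  · have h1 := relM_shift_i 1 u h c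
    have h2 := relM_flip_i (-1) u h (c + 1)
    rw [neg_neg] at h2
    exact Rel.trans h1 h2
  · have h1 := relM_flip_i (-1) u h c
    rw [neg_neg] at h1
    have h2 := relM_shift_i 1 u h c
    exact Rel.trans h1 h2

lemma relM_int (s u : ℝ) (hs : s = 1 ∨ s = -1) {i j : Fin (m+2)} (h : i ≠ j)
    (c : ℝ) (t : ℤ) :
    Rel (m+2) (s • epsr i + u • epsr j, c) (s • epsr i + u • epsr j, c + t) := by
  induction t using Int.induction_on with
  | zero => simpa using Rel.refl _ _
  | succ k ih =>
    refine Rel.trans ih ?_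
    have := relM_step s u hs h (c + k)
    have he : (c + (k:ℝ)) + 1 = c + ((k:ℤ)+1 : ℤ) := by push_cast; ring
    rwa [he] at this
  | pred k ih =>
    refine Rel.trans ih ?_
    have := relM_step s u hs h (c + ((-(k:ℤ)-1 : ℤ) : ℝ))
    have he : (c + ((-(k:ℤ)-1 : ℤ):ℝ)) + 1 = c + ((-(k:ℤ) : ℤ):ℝ) := by push_cast; ring
    rw [he] at this
    exact this.symm

lemma exists_perm {i j i' j' : Fin (m+2)} (h : i ≠ j) (h' : i' ≠ j') :
    ∃ π : Equiv.Perm (Fin (m+2)), π i' = i ∧ π j' = j := by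
  classical
  set τ := Equiv.swap i' i with hτ
  set σ := Equiv.swap (τ j') j with hσ
  refine ⟨τ.trans σ, ?_, ?_⟩
  · have h1 : τ i' = i := Equiv.swap_apply_left _ _
    have h2 : σ i = i := by
      apply Equiv.swap_apply_of_ne_of_ne
      · intro e
        apply h'
        have := congrArg τ e
        rw [Equiv.swap_apply_self] at this
        have h3 : τ i = i' := Equiv.swap_apply_right _ _
        rw [h3] at this
        exact this.symm ▸ rfl
      · exact h
    rw [Equiv.trans_apply, h1, h2]
  · rw [Equiv.trans_apply]
    exact Equiv.swap_apply_left _ _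

lemma relM_full (s u s' u' : ℝ) (hs : s = 1 ∨ s = -1) (hu : u = 1 ∨ u = -1)
    (hs' : s' = 1 ∨ s' = -1) (hu' : u' = 1 ∨ u' = -1)
    {i j i' j' : Fin (m+2)} (h : i ≠ j) (h' : i' ≠ j') (c : ℝ) (t : ℤ) :
    Rel (m+2) (s • epsr i + u • epsr j, c) (s' • epsr i' + u' • epsr j', c + t) := by
  refine Rel.trans (relM_int s u hs h c t) ?_
  have step1 : Rel (m+2) (s • epsr i + u • epsr j, c + t)
      (s' • epsr i + u • epsr j, c + t) := by
    rcases hs with e | e <;> rcases hs' with e' | e' <;> subst e <;> subst e'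
    · exact Rel.refl _ _
    · exact relM_flip_i 1 u h _
    · have := relM_flip_i (-1) u h ((c:ℝ)+t); rwa [neg_neg] at this
    · exact Rel.refl _ _
  refine Rel.trans step1 ?_
  have step2 : Rel (m+2) (s' • epsr i + u • epsr j, c + t)
      (s' • epsr i + u' • epsr j, c + t) := by
    rcases hu with e | e <;> rcases hu' with e' | e' <;> subst e <;> subst e'
    · exact Rel.refl _ _
    · exact relM_flip_j s' 1 h _
    · have := relM_flip_j s' (-1) h ((c:ℝ)+t); rwa [neg_neg] at this
    · exact Rel.refl _ _
  refine Rel.trans step2 ?_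
  obtain ⟨π, hπ1, hπ2⟩ := exists_perm h h'
  have hp := permRel (s' • epsr i + u' • epsr j) ((c:ℝ)+t) π
  rw [pair_comp] at hp
  have e1 : π.symm i = i' := by rw [← hπ1, Equiv.symm_apply_apply]
  have e2 : π.symm j = j' := by rw [← hπ2, Equiv.symm_apply_apply]
  rwa [e1, e2] at hp

-- closure of Sig sets under the three basic moves (on vector parts)
lemma sigS_perm {v : Fin (m+2) → ℝ} (hv : v ∈ SigS (m+2)) (π : Equiv.Perm (Fin (m+2))) :
    v ∘ ⇑π ∈ SigS (m+2) := by
  obtain ⟨s, i, hs, rfl⟩ := hv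
  rw [eps_comp]
  exact ⟨s, π.symm i, hs, rfl⟩

lemma sigS_upd {v : Fin (m+2) → ℝ} (hv : v ∈ SigS (m+2)) (t : Fin (m+2)) :
    Function.update v t (-(v t)) ∈ SigS (m+2) ∧ (v t = 0 ∨ v t = 1 ∨ v t = -1) := by
  obtain ⟨s, i, hs, rfl⟩ := hv
  rcases eq_or_ne t i with h | h
  · subst h
    rw [eps_self, update_eps]
    refine ⟨⟨-s, t, ?_, rfl⟩, ?_⟩ <;> rcases hs with h|h <;> subst h <;> norm_num
  · rw [eps_ne s h, neg_zero]
    have : Function.update (s • epsr i) t 0 = s • epsr i := by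
      rw [← eps_ne s h]
      exact Function.update_eq_self t _
    rw [this]
    exact ⟨⟨s, i, hs, rfl⟩, Or.inl rfl⟩

lemma sigL_perm {v : Fin (m+2) → ℝ} (hv : v ∈ SigL (m+2)) (π : Equiv.Perm (Fin (m+2))) :
    v ∘ ⇑π ∈ SigL (m+2) := by
  obtain ⟨s, i, hs, rfl⟩ := hv
  rw [eps_comp]
  exact ⟨s, π.symm i, hs, rfl⟩

lemma sigL_upd {v : Fin (m+2) → ℝ} (hv : v ∈ SigL (m+2)) (t : Fin (m+2)) :
    Function.update v t (-(v t)) ∈ SigL (m+2) ∧ (v t = 0 ∨ v t = 2 ∨ v t = -2) := by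
  obtain ⟨s, i, hs, rfl⟩ := hv
  rcases eq_or_ne t i with h | h
  · subst h
    rw [eps_self, update_eps, show -(2*s) = (2*(-s)) by ring]
    refine ⟨⟨-s, t, ?_, rfl⟩, ?_⟩ <;> rcases hs with h|h <;> subst h <;> norm_num
  · rw [eps_ne _ h, neg_zero]
    have : Function.update ((2*s) • epsr i) t 0 = (2*s) • epsr i := by
      rw [← eps_ne (2*s) h]
      exact Function.update_eq_self t _
    rw [this]
    exact ⟨⟨s, i, hs, rfl⟩, Or.inl rfl⟩

lemma sigM_mem (s u : ℝ) (hs : s = 1 ∨ s = -1) (hu : u = 1 ∨ u = -1)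
    {i j : Fin (m+2)} (h : i ≠ j) : s • epsr i + u • epsr j ∈ SigM (m+2) := by
  rcases lt_or_gt_of_ne h with hlt | hgt
  · exact ⟨s, u, i, j, hs, hu, hlt, rfl⟩
  · exact ⟨u, s, j, i, hu, hs, hgt, by rw [add_comm (s • epsr i) (u • epsr j)]⟩

lemma sigM_perm {v : Fin (m+2) → ℝ} (hv : v ∈ SigM (m+2)) (π : Equiv.Perm (Fin (m+2))) :
    v ∘ ⇑π ∈ SigM (m+2) := by
  obtain ⟨s, u, i, j, hs, hu, hij, rfl⟩ := hv
  rw [pair_comp]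
  exact sigM_mem s u hs hu (fun e => hij.ne (π.symm.injective e))

lemma update_pair_j (s u a : ℝ) {i j : Fin (m+2)} (h : i ≠ j) :
    Function.update (s • epsr i + u • epsr j) j a = s • epsr i + a • epsr j := by
  rw [add_comm (s • epsr i) (u • epsr j), update_pair u s a h.symm,
    add_comm (a • epsr j) (s • epsr i)]

lemma pair_val_j (s u : ℝ) {i j : Fin (m+2)} (h : i ≠ j) :
    (s • epsr i + u • epsr j) j = u := by
  rw [add_comm]
  exact pair_val_i u s h.symm

lemma pair_val_ne (s u : ℝ) {i j t : Fin (m+2)} (hi : t ≠ i) (hj : t ≠ j) :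
    (s • epsr i + u • epsr j) t = 0 := by
  have := eps_ne s hi
  have := eps_ne u hj
  simp [epsr, hi, hj]

lemma sigM_upd {v : Fin (m+2) → ℝ} (hv : v ∈ SigM (m+2)) (t : Fin (m+2)) :
    Function.update v t (-(v t)) ∈ SigM (m+2) ∧ (v t = 0 ∨ v t = 1 ∨ v t = -1) := by
  obtain ⟨s, u, i, j, hs, hu, hij, rfl⟩ := hv
  rcases eq_or_ne t i with h | h
  · subst h
    rw [pair_val_i s u hij.ne, update_pair s u (-s) hij.ne]
    refine ⟨sigM_mem (-s) u ?_ hu hij.ne, ?_⟩ <;> rcases hs with h|h <;> subst h <;> norm_num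
  · rcases eq_or_ne t j with h2 | h2
    · subst h2
      rw [pair_val_j s u hij.ne, update_pair_j s u (-u) hij.ne]
      refine ⟨sigM_mem s (-u) hs ?_ hij.ne, ?_⟩ <;> rcases hu with h|h <;> subst h <;> norm_num
    · rw [pair_val_ne s u h h2, neg_zero]
      have : Function.update (s • epsr i + u • epsr j) t 0 = s • epsr i + u • epsr j := by
        rw [← pair_val_ne s u h h2]
        exact Function.update_eq_self t _
      rw [this]
      exact ⟨⟨s, u, i, j, hs, hu, hij, rfl⟩, Or.inl rfl⟩

lemma orbit_sub {O : Set (Vh (m+2))} {p₀ : Vh (m+2)}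
    (hinv : ∀ (i : Fin (m+3)) p, p ∈ O → sref (m+2) i p ∈ O) (h0 : p₀ ∈ O) :
    orbitW (m+2) p₀ ⊆ O := by
  rintro g ⟨ω, rfl⟩
  induction ω with
  | nil => exact h0
  | cons a l ih => rw [wprod_cons]; exact hinv a _ ih

lemma inv_of_closures {O : Set (Vh (m+2))}
    (hperm : ∀ v c (π : Equiv.Perm (Fin (m+2))), (v,c) ∈ O → (v ∘ ⇑π, c) ∈ O)
    (hupd : ∀ v c t, (v,c) ∈ O → (Function.update v t (-(v t)), c) ∈ O)
    (hshift : ∀ v c t, (v,c) ∈ O → (Function.update v t (-(v t)), c + v t) ∈ O) :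
    ∀ (i : Fin (m+3)) p, p ∈ O → sref (m+2) i p ∈ O := by
  intro i p hp
  obtain ⟨v, c⟩ := p
  rcases fin_cases3 i with h|h|⟨k,h⟩ <;> subst h
  · rw [G0]; exact hshift v c i0 hp
  · rw [lemGL]; exact hupd v c iL hp
  · rw [lemGM]; exact hperm v c _ hp

lemma invOov : ∀ (i : Fin (m+3)) p, p ∈ Oov (m+2) → sref (m+2) i p ∈ Oov (m+2) := by
  refine inv_of_closures ?_ ?_ ?_
  · rintro v c π ⟨hδ, hv⟩; exact ⟨hδ, sigS_perm hv π⟩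
  · rintro v c t ⟨hδ, hv⟩; exact ⟨hδ, (sigS_upd hv t).1⟩
  · rintro v c t ⟨⟨k, hk⟩, hv⟩
    obtain ⟨h1, h2⟩ := sigS_upd hv t
    refine ⟨?_, h1⟩
    rcases h2 with e|e|e
    · exact ⟨k, by dsimp only at hk e ⊢; rw [hk, e]; ring⟩
    · exact ⟨k+1, by dsimp only at hk e ⊢; rw [hk, e]; push_cast; ring⟩
    · exact ⟨k-1, by dsimp only at hk e ⊢; rw [hk, e]; push_cast; ring⟩

lemma invOnv : ∀ (i : Fin (m+3)) p, p ∈ Onv (m+2) → sref (m+2) i p ∈ Onv (m+2) := by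
  refine inv_of_closures ?_ ?_ ?_
  · rintro v c π ⟨hδ, hv⟩; exact ⟨hδ, sigS_perm hv π⟩
  · rintro v c t ⟨hδ, hv⟩; exact ⟨hδ, (sigS_upd hv t).1⟩
  · rintro v c t ⟨⟨k, hk⟩, hv⟩
    obtain ⟨h1, h2⟩ := sigS_upd hv t
    refine ⟨?_, h1⟩
    rcases h2 with e|e|e
    · exact ⟨k, by dsimp only at hk e ⊢; rw [hk, e]; ring⟩
    · exact ⟨k+1, by dsimp only at hk e ⊢; rw [hk, e]; push_cast; ring⟩
    · exact ⟨k-1, by dsimp only at hk e ⊢; rw [hk, e]; push_cast; ring⟩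

lemma invOo : ∀ (i : Fin (m+3)) p, p ∈ Oo (m+2) → sref (m+2) i p ∈ Oo (m+2) := by
  refine inv_of_closures ?_ ?_ ?_
  · rintro v c π ⟨hδ, hv⟩; exact ⟨hδ, sigL_perm hv π⟩
  · rintro v c t ⟨hδ, hv⟩; exact ⟨hδ, (sigL_upd hv t).1⟩
  · rintro v c t ⟨⟨k, hk⟩, hv⟩
    obtain ⟨h1, h2⟩ := sigL_upd hv t
    refine ⟨?_, h1⟩
    rcases h2 with e|e|e
    · exact ⟨k, by dsimp only at hk e ⊢; rw [hk, e]; ring⟩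
    · exact ⟨k+1, by dsimp only at hk e ⊢; rw [hk, e]; push_cast; ring⟩
    · exact ⟨k-1, by dsimp only at hk e ⊢; rw [hk, e]; push_cast; ring⟩

lemma invOn : ∀ (i : Fin (m+3)) p, p ∈ On (m+2) → sref (m+2) i p ∈ On (m+2) := by
  refine inv_of_closures ?_ ?_ ?_
  · rintro v c π ⟨hδ, hv⟩; exact ⟨hδ, sigL_perm hv π⟩
  · rintro v c t ⟨hδ, hv⟩; exact ⟨hδ, (sigL_upd hv t).1⟩
  · rintro v c t ⟨⟨k, hk⟩, hv⟩
    obtain ⟨h1, h2⟩ := sigL_upd hv t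
    refine ⟨?_, h1⟩
    rcases h2 with e|e|e
    · exact ⟨k, by dsimp only at hk e ⊢; rw [hk, e]; ring⟩
    · exact ⟨k+1, by dsimp only at hk e ⊢; rw [hk, e]; push_cast; ring⟩
    · exact ⟨k-1, by dsimp only at hk e ⊢; rw [hk, e]; push_cast; ring⟩

lemma invOm : ∀ (i : Fin (m+3)) p, p ∈ Om (m+2) → sref (m+2) i p ∈ Om (m+2) := by
  refine inv_of_closures ?_ ?_ ?_
  · rintro v c π ⟨hδ, hv⟩; exact ⟨hδ, sigM_perm hv π⟩
  · rintro v c t ⟨hδ, hv⟩; exact ⟨hδ, (sigM_upd hv t).1⟩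
  · rintro v c t ⟨⟨k, hk⟩, hv⟩
    obtain ⟨h1, h2⟩ := sigM_upd hv t
    refine ⟨?_, h1⟩
    rcases h2 with e|e|e
    · exact ⟨k, by dsimp only at hk e ⊢; rw [hk, e]; ring⟩
    · exact ⟨k+1, by dsimp only at hk e ⊢; rw [hk, e]; push_cast; ring⟩
    · exact ⟨k-1, by dsimp only at hk e ⊢; rw [hk, e]; push_cast; ring⟩

-- base point normal forms
lemma ha0v : a0v (m+2) = (((-1 : ℝ) • epsr (i0 : Fin (m+2)) : Fin (m+2) → ℝ), 1/2) := by
  have hf : (fun j : Fin (m+2) => if (j : ℕ) = 0 then (-1:ℝ) else 0)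
      = ((-1 : ℝ) • epsr (i0 : Fin (m+2)) : Fin (m+2) → ℝ) := by
    funext j
    by_cases h : j = (i0 : Fin (m+2))
    · rw [if_pos (by simp [h, i0]), h, eps_self]
    · rw [if_neg (fun (e : (j:ℕ) = 0) => h (Fin.ext e)), eps_ne _ h]
  rw [a0v, hf]

lemma haroot0 : aroot (m+2) 0
    = (((2*(-1) : ℝ) • epsr (i0 : Fin (m+2)) : Fin (m+2) → ℝ), 1) := by
  have hf : (fun j : Fin (m+2) => if (j : ℕ) = 0 then (-2:ℝ) else 0)
      = (((2*(-1) : ℝ)) • epsr (i0 : Fin (m+2)) : Fin (m+2) → ℝ) := by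
    funext j
    by_cases h : j = (i0 : Fin (m+2))
    · rw [if_pos (by simp [h, i0]), h, eps_self]; norm_num
    · rw [if_neg (fun (e : (j:ℕ) = 0) => h (Fin.ext e)), eps_ne _ h]
  rw [aroot, if_pos (by simp), hf]

lemma hanv : anv (m+2) = (((1 : ℝ) • epsr (iL : Fin (m+2)) : Fin (m+2) → ℝ), 0) := by
  have hf : (fun j : Fin (m+2) => if (j : ℕ) = m+2-1 then (1:ℝ) else 0)
      = ((1 : ℝ) • epsr (iL : Fin (m+2)) : Fin (m+2) → ℝ) := by
    funext j
    by_cases h : j = (iL : Fin (m+2))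
    · rw [if_pos (by simp [h, iL]), h, eps_self]
    · rw [if_neg (by simp only [iL, Fin.ext_iff] at h ⊢; omega), eps_ne _ h]
  rw [anv, hf]

lemma harootL : aroot (m+2) (Fin.last (m+2))
    = (((2*(1:ℝ)) • epsr (iL : Fin (m+2)) : Fin (m+2) → ℝ), 0) := by
  have hf : (fun j : Fin (m+2) => if (j : ℕ) = m+2-1 then (2:ℝ) else 0)
      = (((2*(1:ℝ))) • epsr (iL : Fin (m+2)) : Fin (m+2) → ℝ) := by
    funext j
    by_cases h : j = (iL : Fin (m+2))
    · rw [if_pos (by simp [h, iL]), h, eps_self]; norm_num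
    · rw [if_neg (by simp only [iL, Fin.ext_iff] at h ⊢; omega), eps_ne _ h]
  rw [aroot]
  rw [show ((Fin.last (m+2) : Fin (m+3)) : ℕ) = m + 2 from rfl]
  rw [if_neg (by omega), if_pos rfl, hf]

lemma harootM (i : Fin (m+3)) (h1 : 1 ≤ (i:ℕ)) (h2 : (i:ℕ) ≤ m+1) :
    aroot (m+2) i = (((1:ℝ) • epsr (⟨(i:ℕ)-1, by omega⟩ : Fin (m+2))
      + ((-1 : ℝ)) • epsr (⟨(i:ℕ), by omega⟩ : Fin (m+2)) : Fin (m+2) → ℝ), 0) := by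
  have hvne : (i:ℕ)-1 ≠ (i:ℕ) := by omega
  have hne : (⟨(i:ℕ)-1, by omega⟩ : Fin (m+2)) ≠ (⟨(i:ℕ), by omega⟩ : Fin (m+2)) :=
    fun e => hvne (congrArg Fin.val e)
  have hf : (fun j : Fin (m+2) =>
        if (j : ℕ) = (i:ℕ)-1 then (1:ℝ) else if (j : ℕ) = (i:ℕ) then -1 else 0)
      = ((1:ℝ) • epsr (⟨(i:ℕ)-1, by omega⟩ : Fin (m+2))
        + ((-1 : ℝ)) • epsr (⟨(i:ℕ), by omega⟩ : Fin (m+2)) : Fin (m+2) → ℝ) := by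
    funext j
    rcases eq_or_ne j (⟨(i:ℕ)-1, by omega⟩ : Fin (m+2)) with h | h
    · rw [if_pos (by rw [h]), h, pair_val_i 1 (-1) hne]
    · rcases eq_or_ne j (⟨(i:ℕ), by omega⟩ : Fin (m+2)) with h3 | h3
      · rw [if_neg (fun e => h (Fin.val_injective e)),
          if_pos (by rw [h3]), h3, pair_val_j 1 (-1) hne]
      · rw [if_neg (fun e => h (Fin.val_injective e)),
          if_neg (fun e => h3 (Fin.val_injective e)),
          pair_val_ne 1 (-1) h h3]
  rw [aroot, if_neg (by omega), if_neg (by omega), hf]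

lemma orbOov : orbitW (m+2) (a0v (m+2)) = Oov (m+2) := by
  apply Set.Subset.antisymm
  · refine orbit_sub invOov ?_
    rw [ha0v]
    exact ⟨⟨0, by norm_num⟩, ⟨-1, i0, Or.inr rfl, rfl⟩⟩
  · rintro ⟨v, c⟩ ⟨⟨k, hk⟩, ⟨s, i, hs, rfl⟩⟩
    show Rel (m+2) (a0v (m+2)) _
    rw [ha0v]
    have h := relS_full (-1) s (Or.inr rfl) hs i0 i (1/2) k
    have he : (1/2 : ℝ) + k = c := by dsimp only at hk; rw [hk]; ring
    rwa [he] at h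

lemma orbOo : orbitW (m+2) (aroot (m+2) 0) = Oo (m+2) := by
  apply Set.Subset.antisymm
  · refine orbit_sub invOo ?_
    rw [haroot0]
    exact ⟨⟨0, by norm_num⟩, ⟨-1, i0, Or.inr rfl, rfl⟩⟩
  · rintro ⟨v, c⟩ ⟨⟨k, hk⟩, ⟨s, i, hs, rfl⟩⟩
    show Rel (m+2) (aroot (m+2) 0) _
    rw [haroot0]
    have h := relL_full (-1) s (Or.inr rfl) hs i0 i 1 k
    have he : (1 : ℝ) + 2*k = c := by dsimp only at hk; rw [hk]; ring
    rwa [he] at h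

lemma orbOnv : orbitW (m+2) (anv (m+2)) = Onv (m+2) := by
  apply Set.Subset.antisymm
  · refine orbit_sub invOnv ?_
    rw [hanv]
    exact ⟨⟨0, by norm_num⟩, ⟨1, iL, Or.inl rfl, rfl⟩⟩
  · rintro ⟨v, c⟩ ⟨⟨k, hk⟩, ⟨s, i, hs, rfl⟩⟩
    show Rel (m+2) (anv (m+2)) _
    rw [hanv]
    have h := relS_full 1 s (Or.inl rfl) hs iL i 0 k
    have he : (0 : ℝ) + k = c := by dsimp only at hk; rw [hk]; ring
    rwa [he] at h

lemma orbOn : orbitW (m+2) (aroot (m+2) (Fin.last (m+2))) = On (m+2) := by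
  apply Set.Subset.antisymm
  · refine orbit_sub invOn ?_
    rw [harootL]
    exact ⟨⟨0, by norm_num⟩, ⟨1, iL, Or.inl rfl, rfl⟩⟩
  · rintro ⟨v, c⟩ ⟨⟨k, hk⟩, ⟨s, i, hs, rfl⟩⟩
    show Rel (m+2) (aroot (m+2) (Fin.last (m+2))) _
    rw [harootL]
    have h := relL_full 1 s (Or.inl rfl) hs iL i 0 k
    have he : (0 : ℝ) + 2*k = c := by dsimp only at hk; rw [hk]; ring
    rwa [he] at h

lemma orbOm (i : Fin (m+3)) (h1 : 1 ≤ (i:ℕ)) (h2 : (i:ℕ) ≤ m+1) :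
    orbitW (m+2) (aroot (m+2) i) = Om (m+2) := by
  have hvne : (i:ℕ)-1 ≠ (i:ℕ) := by omega
  have hne : (⟨(i:ℕ)-1, by omega⟩ : Fin (m+2)) ≠ (⟨(i:ℕ), by omega⟩ : Fin (m+2)) :=
    fun e => hvne (congrArg Fin.val e)
  apply Set.Subset.antisymm
  · refine orbit_sub invOm ?_
    rw [harootM i h1 h2]
    exact ⟨⟨0, by norm_num⟩, sigM_mem 1 (-1) (Or.inl rfl) (Or.inr rfl) hne⟩
  · rintro ⟨v, c⟩ ⟨⟨k, hk⟩, ⟨s, u, x, y, hs, hu, hxy, rfl⟩⟩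
    show Rel (m+2) (aroot (m+2) i) _
    rw [harootM i h1 h2]
    have h := relM_full 1 (-1) s u (Or.inl rfl) (Or.inr rfl) hs hu hne hxy.ne 0 k
    have he : (0 : ℝ) + k = c := by dsimp only at hk; rw [hk]; ring
    rwa [he] at h

-- disjointness helpers
lemma sigS_not_sigL {v : Fin (m+2) → ℝ} (h1 : v ∈ SigS (m+2)) (h2 : v ∈ SigL (m+2)) :
    False := by
  obtain ⟨s, i, hs, rfl⟩ := h1
  obtain ⟨u, j, hu, he⟩ := h2
  have hv := congrFun he i
  rcases eq_or_ne i j with h | h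
  · subst h
    rw [eps_self, eps_self] at hv
    rcases hs with e|e <;> rcases hu with e'|e' <;> rw [e, e'] at hv <;> norm_num at hv
  · rw [eps_self, eps_ne _ h] at hv
    rcases hs with e|e <;> rw [e] at hv <;> norm_num at hv

lemma sigS_not_sigM {v : Fin (m+2) → ℝ} (h1 : v ∈ SigS (m+2)) (h2 : v ∈ SigM (m+2)) :
    False := by
  obtain ⟨s, i, hs, rfl⟩ := h1
  obtain ⟨a, b, x, y, ha, hb, hxy, he⟩ := h2
  have hx := congrFun he x
  rw [pair_val_i a b hxy.ne] at hx
  have hy := congrFun he y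
  rw [pair_val_j a b hxy.ne] at hy
  rcases eq_or_ne x i with e | e
  · have hyi : y ≠ i := fun ee => hxy.ne (e.trans ee.symm)
    rw [eps_ne _ hyi] at hy
    rcases hb with e'|e' <;> rw [e'] at hy <;> norm_num at hy
  · rw [eps_ne _ e] at hx
    rcases ha with e'|e' <;> rw [e'] at hx <;> norm_num at hx

lemma sigL_not_sigM {v : Fin (m+2) → ℝ} (h1 : v ∈ SigL (m+2)) (h2 : v ∈ SigM (m+2)) :
    False := by
  obtain ⟨s, i, hs, rfl⟩ := h1
  obtain ⟨a, b, x, y, ha, hb, hxy, he⟩ := h2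
  have hx := congrFun he x
  rw [pair_val_i a b hxy.ne] at hx
  have hy := congrFun he y
  rw [pair_val_j a b hxy.ne] at hy
  rcases eq_or_ne x i with e | e
  · have hyi : y ≠ i := fun ee => hxy.ne (e.trans ee.symm)
    rw [eps_ne _ hyi] at hy
    rcases hb with e'|e' <;> rw [e'] at hy <;> norm_num at hy
  · rw [eps_ne _ e] at hx
    rcases ha with e'|e' <;> rw [e'] at hx <;> norm_num at hx

lemma half_not_int {k l : ℤ} (h : (k:ℝ) + 1/2 = (l:ℝ)) : False := by
  have h1 : ((2*k+1 : ℤ) : ℝ) = ((2*l : ℤ) : ℝ) := by push_cast; linarith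
  have h2 : (2*k+1 : ℤ) = 2*l := by exact_mod_cast h1
  omega

lemma odd_not_even {k l : ℤ} (h : 2*(k:ℝ) + 1 = 2*(l:ℝ)) : False := by
  have h1 : ((2*k+1 : ℤ) : ℝ) = ((2*l : ℤ) : ℝ) := by push_cast; linarith
  have h2 : (2*k+1 : ℤ) = 2*l := by exact_mod_cast h1
  omega

lemma disj : (([Oov (m+2), Oo (m+2), Om (m+2), Onv (m+2), On (m+2)] :
    List (Set (Vh (m+2)))).Pairwise (fun A B => A ∩ B = ∅)) := by
  have dSL : ∀ c : ℝ, ∀ v : Fin (m+2) → ℝ,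
      v ∈ SigS (m+2) → v ∈ SigL (m+2) → False := fun _ v h1 h2 => sigS_not_sigL h1 h2
  refine List.Pairwise.cons ?_ (List.Pairwise.cons ?_ (List.Pairwise.cons ?_
    (List.Pairwise.cons ?_ (List.pairwise_singleton _ _))))
  · intro B hB
    simp only [List.mem_cons, List.mem_singleton, List.not_mem_nil, or_false] at hB
    rcases hB with rfl | rfl | rfl | rfl
    · exact Set.eq_empty_iff_forall_notMem.mpr (by
        rintro ⟨v, c⟩ ⟨⟨_, h1⟩, ⟨_, h2⟩⟩
        exact sigS_not_sigL h1 h2)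
    · exact Set.eq_empty_iff_forall_notMem.mpr (by
        rintro ⟨v, c⟩ ⟨⟨_, h1⟩, ⟨_, h2⟩⟩
        exact sigS_not_sigM h1 h2)
    · exact Set.eq_empty_iff_forall_notMem.mpr (by
        rintro ⟨v, c⟩ ⟨⟨⟨k, hk⟩, _⟩, ⟨⟨l, hl⟩, _⟩⟩
        exact half_not_int (hk ▸ hl : (k:ℝ) + 1/2 = (l:ℝ)))
    · exact Set.eq_empty_iff_forall_notMem.mpr (by
        rintro ⟨v, c⟩ ⟨⟨_, h1⟩, ⟨_, h2⟩⟩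
        exact sigS_not_sigL h1 h2)
  · intro B hB
    simp only [List.mem_cons, List.mem_singleton, List.not_mem_nil, or_false] at hB
    rcases hB with rfl | rfl | rfl
    · exact Set.eq_empty_iff_forall_notMem.mpr (by
        rintro ⟨v, c⟩ ⟨⟨_, h1⟩, ⟨_, h2⟩⟩
        exact sigL_not_sigM h1 h2)
    · exact Set.eq_empty_iff_forall_notMem.mpr (by
        rintro ⟨v, c⟩ ⟨⟨_, h1⟩, ⟨_, h2⟩⟩
        exact sigS_not_sigL h2 h1)
    · exact Set.eq_empty_iff_forall_notMem.mpr (by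
        rintro ⟨v, c⟩ ⟨⟨⟨k, hk⟩, _⟩, ⟨⟨l, hl⟩, _⟩⟩
        exact odd_not_even (hk ▸ hl : 2*(k:ℝ) + 1 = 2*(l:ℝ)))
  · intro B hB
    simp only [List.mem_cons, List.mem_singleton, List.not_mem_nil, or_false] at hB
    rcases hB with rfl | rfl
    · exact Set.eq_empty_iff_forall_notMem.mpr (by
        rintro ⟨v, c⟩ ⟨⟨_, h1⟩, ⟨_, h2⟩⟩
        exact sigS_not_sigM h2 h1)
    · exact Set.eq_empty_iff_forall_notMem.mpr (by
        rintro ⟨v, c⟩ ⟨⟨_, h1⟩, ⟨_, h2⟩⟩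
        exact sigL_not_sigM h2 h1)
  · intro B hB
    simp only [List.mem_singleton, List.mem_cons, List.not_mem_nil, or_false] at hB
    subst hB
    exact Set.eq_empty_iff_forall_notMem.mpr (by
      rintro ⟨v, c⟩ ⟨⟨_, h1⟩, ⟨_, h2⟩⟩
      exact sigS_not_sigL h1 h2)

lemma unionS : Oov (m+2) ∪ Oo (m+2) ∪ Om (m+2) ∪ Onv (m+2) ∪ On (m+2) = Sset (m+2) := by
  ext ⟨v, c⟩
  constructor
  · rintro ((((⟨⟨k,hk⟩, hv⟩ | ⟨⟨k,hk⟩, hv⟩) | ⟨⟨k,hk⟩, hv⟩) | ⟨⟨k,hk⟩, hv⟩) | ⟨⟨k,hk⟩, hv⟩)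
    · exact Or.inl ⟨2*k+1, by dsimp only at hk ⊢; rw [hk]; push_cast; ring, hv⟩
    · exact Or.inr (Or.inl ⟨2*k+1, by dsimp only at hk ⊢; rw [hk]; push_cast; ring, hv⟩)
    · exact Or.inr (Or.inr ⟨k, hk, hv⟩)
    · exact Or.inl ⟨2*k, by dsimp only at hk ⊢; rw [hk]; push_cast; ring, hv⟩
    · exact Or.inr (Or.inl ⟨2*k, by dsimp only at hk ⊢; rw [hk]; push_cast; ring, hv⟩)
  · rintro (⟨k, hk, hv⟩ | ⟨k, hk, hv⟩ | ⟨k, hk, hv⟩)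
    · rcases Int.even_or_odd k with ⟨l, hl⟩ | ⟨l, hl⟩
      · exact Or.inl (Or.inr ⟨⟨l, by
          dsimp only at hk ⊢; rw [hk, hl]; push_cast; ring⟩, hv⟩)
      · exact Or.inl (Or.inl (Or.inl (Or.inl ⟨⟨l, by
          dsimp only at hk ⊢; rw [hk, hl]; push_cast; ring⟩, hv⟩)))
    · rcases Int.even_or_odd k with ⟨l, hl⟩ | ⟨l, hl⟩
      · exact Or.inr ⟨⟨l, by dsimp only at hk ⊢; rw [hk, hl]; push_cast; ring⟩, hv⟩
      · exact Or.inl (Or.inl (Or.inl (Or.inr ⟨⟨l, by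
          dsimp only at hk ⊢; rw [hk, hl]; push_cast; ring⟩, hv⟩)))
    · exact Or.inl (Or.inl (Or.inr ⟨⟨k, hk⟩, hv⟩))

end S16

/-- the five sets 𝒲a_0^∨ = (1/2+ℤ)δ+Σ_s, 𝒲a_0 = (1+2ℤ)δ+Σ_l,
𝒲a_i = ℤδ+Σ_m (1 ≤ i ≤ n−1), 𝒲a_n^∨ = ℤδ+Σ_s, 𝒲a_n = 2ℤδ+Σ_l are precisely the
𝒲-orbits in S, and they partition S. -/
theorem stmt16 (n : ℕ) (hn : 2 ≤ n) :
    orbitW n (a0v n) = Oov n ∧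
    orbitW n (aroot n 0) = Oo n ∧
    (∀ i : Fin (n + 1), 1 ≤ (i : ℕ) → (i : ℕ) ≤ n - 1 → orbitW n (aroot n i) = Om n) ∧
    orbitW n (anv n) = Onv n ∧
    orbitW n (aroot n (Fin.last n)) = On n ∧
    ([Oov n, Oo n, Om n, Onv n, On n] : List (Set (Vh n))).Pairwise
      (fun A B => A ∩ B = ∅) ∧
    Oov n ∪ Oo n ∪ Om n ∪ Onv n ∪ On n = Sset n := by
  obtain ⟨m, rfl⟩ : ∃ m, n = m + 2 := ⟨n - 2, by omega⟩
  refine ⟨S16.orbOov, S16.orbOo, ?_, S16.orbOnv, S16.orbOn, S16.disj, S16.unionS⟩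
  intro i hi1 hi2
  exact S16.orbOm i hi1 (by omega)

end
end
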